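/- arXiv:1610.03563 — 9 statements merged into one kernel-verified Lean document; each statement's English description precedes it below -/
import Mathlib

section
/- Let m ∈ ℕ and let a, b, c, b₀, …, b_m be polynomials in ℂ[t₁, t₂]. Suppose the map Φ: ℂ² × ℂ² → ℂ² given by (t₁,t₂)·(x,y) = (a(t₁,t₂)·x + Σ_{i=0}^{m} bᵢ(t₁,t₂)·yⁱ , b(t₁,t₂)·y + c(t₁,t₂)) defines an action of the additive group (ℂ², +) on ℂ². Then: (1) a(t₁,t₂) = b(t₁,t₂) = 1 for all (t₁,t₂) ∈ ℂ²; (2) there exist c₁, c₂ ∈ ℂ such that c(t₁,t₂) = c₁t₁ + c₂t₂ for all (t₁,t₂); (3) if (c₁,c₂) = (0,0), then each bᵢ is a homogeneous linear polynomial in (t₁,t₂); (4) if (c₁,c₂) ≠ (0,0), then there exist λ₀, …, λ_m, μ₀ ∈ ℂ such that bᵢ(t₁,t₂) = gᵢ(c₁t₁ + c₂t₂) for 1 ≤ i ≤ m and b₀(t₁,t₂) = g₀(c₁t₁ + c₂t₂) + μ₀(c̄₂t₁ − c̄₁t₂), where c̄₁, c̄₂ are the complex conjugates of c₁, c₂ and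 gᵢ(r) := Σ_{j=i}^{m} (λⱼ/(j−i+1))·C(j, j−i)·r^{j−i+1}. -/
open Finset

/-- Evaluation of a polynomial in two variables at a point of `ℂ²`. -/
noncomputable def ev (p : MvPolynomial (Fin 2) ℂ) (t : ℂ × ℂ) : ℂ :=
  MvPolynomial.eval ![t.1, t.2] p

/-- `gfun m l i r = ∑_{j=i}^{m} (l j/(j-i+1)) * C(j, j-i) * r^(j-i+1)`. -/
noncomputable def gfun (m : ℕ) (l : ℕ → ℂ) (i : ℕ) (r : ℂ) : ℂ :=
  ∑ j ∈ Finset.Icc i m, (l j / ((j - i + 1 : ℕ) : ℂ)) * ((j.choose (j - i) : ℕ) : ℂ) * r ^ (j - i + 1)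

/-- A (left) action of the additive group `(ℂ², +)` on `ℂ²`. -/
def IsAction (Φ : (ℂ × ℂ) → (ℂ × ℂ) → ℂ × ℂ) : Prop :=
  (∀ z, Φ (0, 0) z = z) ∧ ∀ t t' z, Φ (t + t') z = Φ t (Φ t' z)

/-- The map `(t₁,t₂)·(x,y) = (a(t)·x + Σᵢ bᵢ(t)·yⁱ, b(t)·y + c(t))`. -/
noncomputable def Phi1 (m : ℕ) (A B C : MvPolynomial (Fin 2) ℂ) (Bc : ℕ → MvPolynomial (Fin 2) ℂ)
    (t z : ℂ × ℂ) : ℂ × ℂ :=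
  (ev A t * z.1 + ∑ i ∈ Finset.range (m + 1), ev (Bc i) t * z.2 ^ i,
   ev B t * z.2 + ev C t)

/-
Write `F_t(y) = Σ bᵢ(t) yⁱ`. The action law makes `a` and `b` exponential and `c` additive; a
function that is polynomial on every line through `0` is then `1`, resp. linear. With `a = b = 1`
the first coordinate of the law at `x = 0` is the cocycle identity
`F_{t+t'}(y) = F_{t'}(y) + F_t(y + c(t'))`. If `c = 0` it makes every `bᵢ` additive. Otherwise take
`t₀` with `c(t₀) = 1` and `H(y) = b₀(y t₀)`: the identity evaluated at `y = 0` along `t₀` gives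
`F_t(y) = H(y + c(t)) - H(y) + q(t)` with `q` additive, hence linear; the component of `q` along `c`
is absorbed into `H`, what remains is `μ₀ (c̄₂ t₁ - c̄₁ t₂)`, and the coefficients of
`H(y + r) - H(y)` are the `gᵢ(r)` with `λⱼ = (j + 1) · [y^{j+1}] H`.
-/

open Polynomial

def IsPolynomialOnLines {K V : Type*} [CommRing K] [SMul K V] (f : V → K) : Prop :=
  ∀ t : V, ∃ Q : K[X], ∀ s : K, f (s • t) = Q.eval s

theorem MvPolynomial.isPolynomialOnLines_eval {σ R : Type*} [CommRing R] (p : MvPolynomial σ R) :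
    IsPolynomialOnLines fun x : σ → R => eval x p := fun x =>
  ⟨eval₂ Polynomial.C (fun i => Polynomial.X * Polynomial.C (x i)) p, fun s => by
    have hC : (evalRingHom s).comp Polynomial.C = RingHom.id R := by ext; simp
    simp only [polynomial_eval_eval₂, hC, Polynomial.eval_mul, Polynomial.eval_C,
      Polynomial.eval_X]
    rfl⟩

theorem isPolynomialOnLines_ev (p : MvPolynomial (Fin 2) ℂ) : IsPolynomialOnLines (ev p) :=
  fun t => (p.isPolynomialOnLines_eval ![t.1, t.2]).imp fun _ hQ s => by
    rw [← hQ, ev, Prod.smul_fst, Prod.smul_snd, Matrix.smul_cons, Matrix.smul_cons,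
      Matrix.smul_empty]

theorem isPolynomialOnLines_eval_linearMap {K V : Type*} [CommRing K] [AddCommMonoid V]
    [Module K V] (H : K[X]) (γ : V →ₗ[K] K) : IsPolynomialOnLines fun t => H.eval (γ t) :=
  fun t => ⟨H.comp (C (γ t) * X), fun s => show eval (γ (s • t)) H = _ by
    rw [γ.map_smul, smul_eq_mul, eval_comp, eval_mul, eval_C, eval_X, mul_comm]⟩

namespace IsPolynomialOnLines

variable {K V : Type*}

theorem sub [CommRing K] [SMul K V] {f g : V → K} (hf : IsPolynomialOnLines f)
    (hg : IsPolynomialOnLines g) : IsPolynomialOnLines (f - g) := fun t => by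
  obtain ⟨Q, hQ⟩ := hf t
  obtain ⟨R, hR⟩ := hg t
  exact ⟨Q - R, fun s => by simp [hQ, hR]⟩

-- By additivity `s ↦ f (s • t) - s * f t` vanishes at every natural number.
theorem map_smul [Field K] [CharZero K] [AddCommGroup V] [Module K V] {f : V → K}
    (hf : IsPolynomialOnLines f) (hadd : ∀ t t', f (t + t') = f t + f t') (s : K) (t : V) :
    f (s • t) = s * f t := by
  obtain ⟨Q, hQ⟩ := hf t
  let F : V →+ K := AddMonoidHom.mk' f hadd
  have hnat : ∀ n : ℕ, Q.eval (n : K) = (C (f t) * X).eval (n : K) := fun n => by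
    rw [← hQ, Nat.cast_smul_eq_nsmul, eval_mul, eval_C, eval_X, mul_comm]
    exact (map_nsmul F n t).trans (nsmul_eq_mul _ _)
  have hQ' : Q = C (f t) * X := eq_of_infinite_eval_eq _ _ <|
    (Set.infinite_range_of_injective Nat.cast_injective).mono <| by
      rintro _ ⟨n, rfl⟩; exact hnat n
  rw [hQ, hQ', eval_mul, eval_C, eval_X, mul_comm]

-- On each line `f` is a polynomial without roots, as `f (s • t) * f (-(s • t)) = 1`.
theorem eq_one [Field K] [IsAlgClosed K] [AddCommGroup V] [Module K V] {f : V → K}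
    (hf : IsPolynomialOnLines f) (hmul : ∀ t t', f (t + t') = f t * f t') (h0 : f 0 = 1)
    (t : V) : f t = 1 := by
  obtain ⟨Q, hQ⟩ := hf t
  have hroot : ∀ s, ¬ Q.IsRoot s := fun s hs => by
    have := hmul (s • t) (-(s • t))
    rw [add_neg_cancel, h0, hQ, hs.eq_zero, zero_mul] at this
    exact one_ne_zero this
  have hQC : Q = C (Q.coeff 0) := eq_C_of_degree_eq_zero <| by
    by_contra hdeg
    obtain ⟨s, hs⟩ := IsAlgClosed.exists_root Q hdeg
    exact hroot s hs
  have h1 := hQ 1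
  have h0' := hQ 0
  rw [hQC, eval_C] at h1 h0'
  rwa [one_smul, ← h0', zero_smul, h0] at h1

theorem exists_eq_linear [Field K] [CharZero K] {f : K × K → K} (hf : IsPolynomialOnLines f)
    (hadd : ∀ t t', f (t + t') = f t + f t') : ∃ u v : K, ∀ t, f t = u * t.1 + v * t.2 := by
  refine ⟨f (1, 0), f (0, 1), fun t => ?_⟩
  have ht : t = t.1 • ((1 : K), (0 : K)) + t.2 • ((0 : K), (1 : K)) := by simp
  conv_lhs => rw [ht, hadd, hf.map_smul hadd, hf.map_smul hadd]
  ring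

end IsPolynomialOnLines

theorem natDegree_le_of_coeff_taylor_eq {K : Type*} [CommRing K] [IsDomain K] [CharZero K]
    {H : K[X]} {n : ℕ} (h : ∀ y, (taylor y H).coeff n = H.coeff n) : H.natDegree ≤ n := by
  have hconst : hasseDeriv n H = C (H.coeff n) :=
    Polynomial.funext fun y => by rw [← taylor_coeff, h, eval_C]
  have := natDegree_hasseDeriv H n
  rw [hconst, natDegree_C] at this
  omega

section Cocycle

variable {K V : Type*} [CommRing K] [AddCommGroup V] [Module K V] {γ : V →ₗ[K] K} {P : V → K[X]}

-- Evaluating the cocycle identity at `0` along `t₀` shows `P (z • t₀) = H(X + z) - H(X)`;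
-- comparing `P (t + z • t₀)` and `P (z • t₀ + t)` at `0` then gives `P t` at the point `z`.
theorem eq_taylor_sub_add_C_of_cocycle [IsDomain K] [Infinite K]
    (hP : ∀ t t', P (t + t') = P t' + taylor (γ t') (P t)) {t₀ : V} (h₀ : γ t₀ = 1) {H : K[X]}
    (hH : ∀ y, H.eval y = (P (y • t₀)).eval 0) (t : V) :
    P t = taylor (γ t) H - H + C ((P t).eval 0 - H.eval (γ t)) := by
  have hP₀ : ∀ t t', (P (t + t')).eval 0 = (P t').eval 0 + (P t).eval (γ t') := fun t t' => by
    rw [hP, eval_add, taylor_eval, zero_add]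
  have hline : ∀ z w, (P (z • t₀)).eval w = H.eval (z + w) - H.eval w := fun z w => by
    have := hP₀ (z • t₀) (w • t₀)
    rw [← add_smul, ← hH, ← hH, γ.map_smul, h₀, smul_eq_mul, mul_one] at this
    rw [this]; ring
  refine Polynomial.funext fun z => ?_
  have h₁ := hP₀ t (z • t₀)
  have h₂ := hP₀ (z • t₀) t
  rw [← hH, γ.map_smul, h₀, smul_eq_mul, mul_one] at h₁
  rw [hline, add_comm] at h₂
  rw [eval_add, eval_sub, taylor_eval, eval_C]
  linear_combination h₂ - h₁

theorem map_add_of_cocycle (hP : ∀ t t', P (t + t') = P t' + taylor (γ t') (P t)) {H : K[X]}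
    {q : V → K} (hq : ∀ t, P t = taylor (γ t) H - H + C (q t)) (t t' : V) :
    q (t + t') = q t + q t' := by
  have := congrArg (eval 0) (hP t t')
  simp only [hq, eval_add, eval_sub, taylor_eval, eval_C, zero_add, map_add, add_comm (γ t')]
    at this
  linear_combination this

end Cocycle

theorem exists_taylor_sub_add_C_of_cocycle {K V : Type*} [Field K] [CharZero K] [AddCommGroup V]
    [Module K V] {γ : V →ₗ[K] K} (hγ : γ ≠ 0) {P : V → K[X]}
    (hP : ∀ t t', P (t + t') = P t' + taylor (γ t') (P t))
    (hpoly : IsPolynomialOnLines fun t => (P t).eval 0) {m : ℕ}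
    (hdeg : ∀ t, (P t).coeff (m + 1) = 0) :
    ∃ H : K[X], H.natDegree ≤ m + 1 ∧ ∃ q : V → K, IsPolynomialOnLines q ∧
      (∀ t t', q (t + t') = q t + q t') ∧ ∀ t, P t = taylor (γ t) H - H + C (q t) := by
  obtain ⟨t₀, h₀⟩ : ∃ t₀, γ t₀ = 1 := by
    obtain ⟨t₁, ht₁⟩ : ∃ t, γ t ≠ 0 := by
      by_contra! h
      exact hγ (LinearMap.ext h)
    exact ⟨(γ t₁)⁻¹ • t₁, by rw [γ.map_smul, smul_eq_mul, inv_mul_cancel₀ ht₁]⟩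
  obtain ⟨H, hH⟩ := hpoly t₀
  have hrep := eq_taylor_sub_add_C_of_cocycle hP h₀ fun y => (hH y).symm
  refine ⟨H, natDegree_le_of_coeff_taylor_eq fun y => ?_, _,
    hpoly.sub (isPolynomialOnLines_eval_linearMap H γ), map_add_of_cocycle hP hrep, hrep⟩
  have := congrArg (coeff · (m + 1)) (hrep (y • t₀))
  simp only [hdeg, coeff_add, coeff_sub, coeff_C, γ.map_smul, h₀, smul_eq_mul, mul_one,
    if_neg (Nat.succ_ne_zero m), add_zero] at this
  exact sub_eq_zero.1 this.symm

theorem coeff_taylor_sub_self_eq_gfun {m : ℕ} {H : ℂ[X]} (hH : H.natDegree ≤ m + 1) (r : ℂ)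
    {i : ℕ} (hi : i ≤ m) :
    (taylor r H - H).coeff i = gfun m (fun j => (j + 1) * H.coeff (j + 1)) i r := by
  have expand : taylor r H - H = ∑ k ∈ range (m + 2), C (H.coeff k) * ((X + C r) ^ k - X ^ k) := by
    conv_lhs => rw [H.as_sum_range' (m + 2) (by omega)]
    simp only [map_sum, ← C_mul_X_pow_eq_monomial, taylor_mul, taylor_C, taylor_X_pow, mul_sub,
      sum_sub_distrib]
  rw [expand, finsetSum_coeff, sum_range_succ']
  simp only [coeff_C_mul, coeff_sub, coeff_X_add_C_pow, coeff_X_pow]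
  have hzero :
      H.coeff 0 * (r ^ (0 - i) * ((Nat.choose 0 i : ℕ) : ℂ) - if i = 0 then 1 else 0) = 0 := by
    rcases i with _ | i <;> simp
  rw [hzero, add_zero, gfun]
  symm
  rw [← sum_subset (fun j hj => mem_range.2 (Nat.lt_succ_of_le (mem_Icc.1 hj).2))]
  · refine sum_congr rfl fun j hj => ?_
    obtain ⟨hij, -⟩ := mem_Icc.1 hj
    have hchoose : (j + 1).choose i * (j - i + 1) = (j + 1) * j.choose (j - i) := by
      rw [Nat.choose_symm hij, ← Nat.sub_add_comm hij, ← Nat.choose_mul_succ_eq, mul_comm]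
    have hchoose' : ((j + 1).choose i : ℂ) * ((j - i + 1 : ℕ) : ℂ) =
        (j + 1) * (j.choose (j - i) : ℂ) := by
      exact_mod_cast hchoose
    have hne : ((j - i + 1 : ℕ) : ℂ) ≠ 0 := Nat.cast_ne_zero.2 (Nat.succ_ne_zero _)
    rw [if_neg (by omega), show j + 1 - i = j - i + 1 by omega]
    field_simp
    linear_combination (-(H.coeff (j + 1) * r ^ (j - i + 1))) * hchoose'
  · intro j hjm hj
    rw [mem_range] at hjm
    rw [mem_Icc, not_and_or, not_le, not_le] at hj
    rcases hj with hj | hj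
    · rcases (Nat.succ_le_of_lt hj).eq_or_lt with h | h
      · simp [← h]
      · simp [Nat.choose_eq_zero_of_lt h, show i ≠ j + 1 by omega]
    · omega

theorem exists_eq_mul_add_mul_conj {c₁ c₂ : ℂ} (hc : (c₁, c₂) ≠ (0, 0)) (u v : ℂ) :
    ∃ l μ : ℂ, ∀ t : ℂ × ℂ, u * t.1 + v * t.2 =
      l * (c₁ * t.1 + c₂ * t.2) + μ * ((starRingEnd ℂ) c₂ * t.1 - (starRingEnd ℂ) c₁ * t.2) := by
  have hN : c₁ * (starRingEnd ℂ) c₁ + c₂ * (starRingEnd ℂ) c₂ ≠ 0 := by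
    rw [Complex.mul_conj, Complex.mul_conj, ← Complex.ofReal_add, Complex.ofReal_ne_zero]
    intro h
    rw [add_eq_zero_iff_of_nonneg (Complex.normSq_nonneg _) (Complex.normSq_nonneg _),
      Complex.normSq_eq_zero, Complex.normSq_eq_zero] at h
    exact hc (by rw [h.1, h.2])
  set N := c₁ * (starRingEnd ℂ) c₁ + c₂ * (starRingEnd ℂ) c₂ with hNdef
  refine ⟨(u * (starRingEnd ℂ) c₁ + v * (starRingEnd ℂ) c₂) / N, (u * c₂ - v * c₁) / N,
    fun t => ?_⟩
  field_simp
  linear_combination (u * t.1 + v * t.2) * hNdef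

noncomputable def fiberPoly (m : ℕ) (Bc : ℕ → MvPolynomial (Fin 2) ℂ) (t : ℂ × ℂ) : ℂ[X] :=
  ∑ i ∈ range (m + 1), C (ev (Bc i) t) * X ^ i

theorem eval_fiberPoly (m : ℕ) (Bc : ℕ → MvPolynomial (Fin 2) ℂ) (t : ℂ × ℂ) (y : ℂ) :
    (fiberPoly m Bc t).eval y = ∑ i ∈ range (m + 1), ev (Bc i) t * y ^ i := by
  simp [fiberPoly, eval_finsetSum]

theorem coeff_fiberPoly (m : ℕ) (Bc : ℕ → MvPolynomial (Fin 2) ℂ) (t : ℂ × ℂ) (i : ℕ) :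
    (fiberPoly m Bc t).coeff i = if i ≤ m then ev (Bc i) t else 0 := by
  simp [fiberPoly, finsetSum_coeff]

section Action

variable {m : ℕ} {a b c : MvPolynomial (Fin 2) ℂ} {Bc : ℕ → MvPolynomial (Fin 2) ℂ}

theorem ev_a_eq_one_of_isAction (hact : IsAction (Phi1 m a b c Bc)) (t : ℂ × ℂ) : ev a t = 1 := by
  have hfst : ∀ t₁ t₂ x, ev a (t₁ + t₂) * x + ∑ i ∈ range (m + 1), ev (Bc i) (t₁ + t₂) * 0 ^ i =
      ev a t₁ * (ev a t₂ * x + ∑ i ∈ range (m + 1), ev (Bc i) t₂ * 0 ^ i) +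
        ∑ i ∈ range (m + 1), ev (Bc i) t₁ * (ev b t₂ * 0 + ev c t₂) ^ i :=
    fun t₁ t₂ x => congrArg Prod.fst (hact.2 t₁ t₂ (x, 0))
  have hid : ∀ x, ev a 0 * x + ∑ i ∈ range (m + 1), ev (Bc i) 0 * 0 ^ i = x :=
    fun x => congrArg Prod.fst (hact.1 (x, 0))
  refine (isPolynomialOnLines_ev a).eq_one (fun t₁ t₂ => ?_) ?_ t
  · linear_combination hfst t₁ t₂ 1 - hfst t₁ t₂ 0
  · linear_combination hid 1 - hid 0

theorem ev_b_eq_one_of_isAction (hact : IsAction (Phi1 m a b c Bc)) (t : ℂ × ℂ) : ev b t = 1 := by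
  have hsnd : ∀ t₁ t₂ y,
      ev b (t₁ + t₂) * y + ev c (t₁ + t₂) = ev b t₁ * (ev b t₂ * y + ev c t₂) + ev c t₁ :=
    fun t₁ t₂ y => congrArg Prod.snd (hact.2 t₁ t₂ (0, y))
  have hid : ∀ y, ev b 0 * y + ev c 0 = y := fun y => congrArg Prod.snd (hact.1 (0, y))
  refine (isPolynomialOnLines_ev b).eq_one (fun t₁ t₂ => ?_) ?_ t
  · linear_combination hsnd t₁ t₂ 1 - hsnd t₁ t₂ 0
  · linear_combination hid 1 - hid 0

theorem ev_c_add_of_isAction (hact : IsAction (Phi1 m a b c Bc)) (t t' : ℂ × ℂ) :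
    ev c (t + t') = ev c t + ev c t' := by
  have h : ev b (t + t') * 0 + ev c (t + t') = ev b t * (ev b t' * 0 + ev c t') + ev c t :=
    congrArg Prod.snd (hact.2 t t' (0, 0))
  simp only [ev_b_eq_one_of_isAction hact, mul_zero, one_mul, zero_add] at h
  linear_combination h

theorem fiberPoly_add_of_isAction (hact : IsAction (Phi1 m a b c Bc)) (t t' : ℂ × ℂ) :
    fiberPoly m Bc (t + t') = fiberPoly m Bc t' + taylor (ev c t') (fiberPoly m Bc t) := by
  refine Polynomial.funext fun y => ?_
  have h : ev a (t + t') * 0 + ∑ i ∈ range (m + 1), ev (Bc i) (t + t') * y ^ i =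
      ev a t * (ev a t' * 0 + ∑ i ∈ range (m + 1), ev (Bc i) t' * y ^ i) +
        ∑ i ∈ range (m + 1), ev (Bc i) t * (ev b t' * y + ev c t') ^ i :=
    congrArg Prod.fst (hact.2 t t' (0, y))
  simp only [ev_a_eq_one_of_isAction hact, ev_b_eq_one_of_isAction hact, mul_zero, one_mul,
    zero_add] at h
  rw [eval_add, taylor_eval, eval_fiberPoly, eval_fiberPoly, eval_fiberPoly]
  linear_combination h

theorem exists_linear_of_isAction_of_ev_c_eq_zero (hact : IsAction (Phi1 m a b c Bc))
    (hc : ∀ t, ev c t = 0) {i : ℕ} (hi : i ≤ m) :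
    ∃ u v : ℂ, ∀ t : ℂ × ℂ, ev (Bc i) t = u * t.1 + v * t.2 := by
  refine (isPolynomialOnLines_ev (Bc i)).exists_eq_linear fun t t' => ?_
  have := congrArg (coeff · i) (fiberPoly_add_of_isAction hact t t')
  simp only [hc, taylor_zero, coeff_add, coeff_fiberPoly, if_pos hi] at this
  linear_combination this

theorem exists_gfun_of_isAction (hact : IsAction (Phi1 m a b c Bc)) {c₁ c₂ : ℂ}
    (hc : ∀ t, ev c t = c₁ * t.1 + c₂ * t.2) (hne : (c₁, c₂) ≠ (0, 0)) :
    ∃ (l : ℕ → ℂ) (μ₀ : ℂ),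
      (∀ t : ℂ × ℂ, ev (Bc 0) t = gfun m l 0 (c₁ * t.1 + c₂ * t.2) +
        μ₀ * ((starRingEnd ℂ) c₂ * t.1 - (starRingEnd ℂ) c₁ * t.2)) ∧
      ∀ i, 1 ≤ i → i ≤ m → ∀ t : ℂ × ℂ, ev (Bc i) t = gfun m l i (c₁ * t.1 + c₂ * t.2) := by
  let γ : ℂ × ℂ →ₗ[ℂ] ℂ := c₁ • LinearMap.fst ℂ ℂ ℂ + c₂ • LinearMap.snd ℂ ℂ ℂ
  have hγ : ∀ t, γ t = c₁ * t.1 + c₂ * t.2 := fun t => rfl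
  have hγ0 : γ ≠ 0 := fun h => hne <| by
    have h₁ := hγ (1, 0)
    have h₂ := hγ (0, 1)
    rw [h, LinearMap.zero_apply] at h₁ h₂
    norm_num at h₁ h₂
    rw [← h₁, ← h₂]
  obtain ⟨H, hHdeg, q, hqpoly, hqadd, hrep⟩ := exists_taylor_sub_add_C_of_cocycle hγ0
    (P := fiberPoly m Bc) (fun t t' => by rw [fiberPoly_add_of_isAction hact, hc, hγ])
    (by simpa [← coeff_zero_eq_eval_zero, coeff_fiberPoly] using isPolynomialOnLines_ev (Bc 0))
    (m := m) (fun t => by rw [coeff_fiberPoly, if_neg (by omega)])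
  obtain ⟨u, v, huv⟩ := hqpoly.exists_eq_linear hqadd
  obtain ⟨lam, μ₀, hlam⟩ := exists_eq_mul_add_mul_conj hne u v
  set H' := H + C lam * X
  have hrep' : ∀ t, fiberPoly m Bc t = taylor (γ t) H' - H' +
      C (μ₀ * ((starRingEnd ℂ) c₂ * t.1 - (starRingEnd ℂ) c₁ * t.2)) := fun t => by
    rw [hrep, huv, hlam, hγ]
    simp only [H', map_add, taylor_mul, taylor_C, taylor_X, C_mul]
    ring
  have hdeg' : H'.natDegree ≤ m + 1 :=
    natDegree_add_le_of_degree_le hHdeg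
      ((natDegree_C_mul_le lam X).trans (natDegree_X_le.trans (by omega)))
  refine ⟨fun j => (j + 1) * H'.coeff (j + 1), μ₀, fun t => ?_, fun i hi him t => ?_⟩
  · have := congrArg (coeff · 0) (hrep' t)
    simpa only [coeff_fiberPoly, if_pos (Nat.zero_le m), coeff_add, coeff_C_zero,
      coeff_taylor_sub_self_eq_gfun hdeg' _ (Nat.zero_le m), hγ] using this
  · have := congrArg (coeff · i) (hrep' t)
    simpa only [coeff_fiberPoly, if_pos him, coeff_add, coeff_C, if_neg (by omega : i ≠ 0),
      add_zero, coeff_taylor_sub_self_eq_gfun hdeg' _ him, hγ] using this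

end Action

/-- Lemma on `𝔾ₐ²`-actions of special form, (⇒) direction. -/
theorem action_lemma_forward (m : ℕ) (A B C : MvPolynomial (Fin 2) ℂ)
    (Bc : ℕ → MvPolynomial (Fin 2) ℂ)
    (hact : IsAction (Phi1 m A B C Bc)) :
    (∀ t : ℂ × ℂ, ev A t = 1 ∧ ev B t = 1) ∧
    ∃ c₁ c₂ : ℂ,
      (∀ t : ℂ × ℂ, ev C t = c₁ * t.1 + c₂ * t.2) ∧
      ((c₁, c₂) = (0, 0) →
        ∀ i ≤ m, ∃ u v : ℂ, ∀ t : ℂ × ℂ, ev (Bc i) t = u * t.1 + v * t.2) ∧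
      ((c₁, c₂) ≠ (0, 0) →
        ∃ (l : ℕ → ℂ) (μ₀ : ℂ),
          (∀ t : ℂ × ℂ, ev (Bc 0) t =
              gfun m l 0 (c₁ * t.1 + c₂ * t.2) +
                μ₀ * ((starRingEnd ℂ) c₂ * t.1 - (starRingEnd ℂ) c₁ * t.2)) ∧
          (∀ i, 1 ≤ i → i ≤ m →
            ∀ t : ℂ × ℂ, ev (Bc i) t = gfun m l i (c₁ * t.1 + c₂ * t.2))) := by
  obtain ⟨c₁, c₂, hc⟩ := (isPolynomialOnLines_ev C).exists_eq_linear (ev_c_add_of_isAction hact)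
  refine ⟨fun t => ⟨ev_a_eq_one_of_isAction hact t, ev_b_eq_one_of_isAction hact t⟩, c₁, c₂, hc,
    fun h0 i hi => ?_, exists_gfun_of_isAction hact hc⟩
  obtain ⟨rfl, rfl⟩ := Prod.mk.inj h0
  exact exists_linear_of_isAction_of_ev_c_eq_zero hact (fun t => by simp [hc]) hi
end

section
/- Let m ∈ ℕ, c₁, c₂ ∈ ℂ, μ₀, λ₀, …, λ_m ∈ ℂ, and define gᵢ(r) := Σ_{j=i}^{m} (λⱼ/(j−i+1))·C(j, j−i)·r^{j−i+1} for 0 ≤ i ≤ m. Define b₀(t₁,t₂) := g₀(c₁t₁ + c₂t₂) + μ₀(c̄₂t₁ − c̄₁t₂) and bᵢ(t₁,t₂) := gᵢ(c₁t₁ + c₂t₂) for 1 ≤ i ≤ m, where c̄₁, c̄₂ are the complex conjugates of c₁, c₂. Then the map (t₁,t₂)·(x,y) = (x + Σ_{i=0}^{m} bᵢ(t₁,t₂)·yⁱ , y + c₁t₁ + c₂t₂) defines an action of the additive group (ℂ², +) on ℂ². -/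
/-!
Summing the coefficients against powers of `y` reorganises, via the binomial theorem, into
`Σᵢ gᵢ(r) yⁱ = G(y + r) - G(y)`, where `G(x) = Σⱼ λⱼ x^{j+1}/(j+1)` is a primitive of
`Σⱼ λⱼ xʲ`. So `(t₁,t₂)` acts as `(x, y) ↦ (x + G(y + s) - G(y) + μ₀ ℓ(t), y + s)` with
`s = c₁t₁ + c₂t₂` and `ℓ(t) = c̄₂t₁ - c̄₁t₂` both additive in `t`, and the action law is the
telescoping `G(y + s + s') - G(y) = (G(y + s') - G(y)) + (G(y + s' + s) - G(y + s'))`.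
-/

open Finset

/-- The coefficient `bᵢ(t₁,t₂) = gᵢ(c₁t₁+c₂t₂) + [i = 0]·μ₀(c̄₂t₁ - c̄₁t₂)`. -/
noncomputable def bCoeff (m : ℕ) (l : ℕ → ℂ) (c₁ c₂ μ₀ : ℂ) (i : ℕ) (t : ℂ × ℂ) : ℂ :=
  gfun m l i (c₁ * t.1 + c₂ * t.2) +
    (if i = 0 then μ₀ * ((starRingEnd ℂ) c₂ * t.1 - (starRingEnd ℂ) c₁ * t.2) else 0)

/-- The map `(t₁,t₂)·(x,y) = (x + Σᵢ bᵢ(t₁,t₂) yⁱ , y + c₁t₁ + c₂t₂)`. -/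
noncomputable def PhiB (m : ℕ) (l : ℕ → ℂ) (c₁ c₂ μ₀ : ℂ) (t z : ℂ × ℂ) : ℂ × ℂ :=
  (z.1 + ∑ i ∈ Finset.range (m + 1), bCoeff m l c₁ c₂ μ₀ i t * z.2 ^ i,
   z.2 + c₁ * t.1 + c₂ * t.2)

theorem add_pow_sub_pow {R : Type*} [CommRing R] (x y : R) (n : ℕ) :
    (x + y) ^ n - x ^ n = ∑ i ∈ range n, x ^ i * y ^ (n - i) * n.choose i := by
  rw [add_pow, sum_range_succ]
  simp

theorem choose_sub_div_eq {K : Type*} [Field K] [CharZero K] {i j : ℕ} (hij : i ≤ j) :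
    (j.choose (j - i) : K) / ((j - i + 1 : ℕ) : K) = ((j + 1).choose i : K) / ((j : K) + 1) := by
  have hsymm : (j + 1).choose (j - i + 1) = (j + 1).choose i := by
    rw [← Nat.choose_symm (by omega : j - i + 1 ≤ j + 1)]
    congr 1
    omega
  have hmul : (j + 1) * j.choose (j - i) = (j + 1).choose i * (j - i + 1) := by
    rw [Nat.add_one_mul_choose_eq, hsymm]
  rw [div_eq_div_iff (by norm_cast) (by norm_cast)]
  exact_mod_cast (Nat.mul_comm _ _).trans hmul

noncomputable def primitive (m : ℕ) (l : ℕ → ℂ) (x : ℂ) : ℂ :=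
  ∑ j ∈ range (m + 1), l j / ((j : ℂ) + 1) * x ^ (j + 1)

theorem gfun_term_mul_pow (l : ℕ → ℂ) (r y : ℂ) {i j : ℕ} (hij : i ≤ j) :
    l j / ((j - i + 1 : ℕ) : ℂ) * (j.choose (j - i) : ℂ) * r ^ (j - i + 1) * y ^ i =
      l j / ((j : ℂ) + 1) * (y ^ i * r ^ (j + 1 - i) * (j + 1).choose i) := by
  calc _ = l j * ((j.choose (j - i) : ℂ) / ((j - i + 1 : ℕ) : ℂ)) * (y ^ i * r ^ (j - i + 1)) := by
        ring
    _ = _ := by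
      rw [choose_sub_div_eq hij, show j + 1 - i = j - i + 1 by omega]
      ring

theorem sum_gfun_mul_pow (m : ℕ) (l : ℕ → ℂ) (r y : ℂ) :
    ∑ i ∈ range (m + 1), gfun m l i r * y ^ i = primitive m l (y + r) - primitive m l y := by
  simp only [gfun, sum_mul, primitive, ← sum_sub_distrib, ← mul_sub, add_pow_sub_pow, mul_sum]
  rw [sum_comm' (t' := range (m + 1)) (s' := fun j => range (j + 1))]
  · refine sum_congr rfl fun j _ => sum_congr rfl fun i hi => ?_
    exact gfun_term_mul_pow l r y (Nat.lt_succ_iff.mp (mem_range.mp hi))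
  · intro i j
    simp only [mem_range, mem_Icc]
    omega

theorem isAction_of_shift (G : ℂ → ℂ) (s ℓ : ℂ × ℂ →+ ℂ) :
    IsAction fun t z => (z.1 + (G (z.2 + s t) - G z.2) + ℓ t, z.2 + s t) := by
  refine ⟨fun z => by simp [Prod.mk_zero_zero], fun t t' z => ?_⟩
  have hshift : z.2 + s (t + t') = z.2 + s t' + s t := by rw [map_add]; ring
  ext <;> dsimp only <;> rw [hshift]
  · rw [map_add]
    ring

theorem PhiB_eq (m : ℕ) (l : ℕ → ℂ) (c₁ c₂ μ₀ : ℂ) (t z : ℂ × ℂ) :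
    PhiB m l c₁ c₂ μ₀ t z =
      (z.1 + (primitive m l (z.2 + (c₁ * t.1 + c₂ * t.2)) - primitive m l z.2) +
          μ₀ * ((starRingEnd ℂ) c₂ * t.1 - (starRingEnd ℂ) c₁ * t.2),
        z.2 + (c₁ * t.1 + c₂ * t.2)) := by
  simp only [PhiB, bCoeff, add_mul, sum_add_distrib, ite_mul, zero_mul, sum_ite_eq',
    mem_range, Nat.zero_lt_succ, if_true, pow_zero, mul_one, sum_gfun_mul_pow, add_assoc]

/-- (⇐) direction of the action lemma: the map above defines an action
of `(ℂ², +)` on `ℂ²`. -/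
theorem action_lemma_backward (m : ℕ) (c₁ c₂ μ₀ : ℂ) (l : ℕ → ℂ) :
    IsAction (PhiB m l c₁ c₂ μ₀) := by
  let s : ℂ × ℂ →+ ℂ := AddMonoidHom.mk' (fun t => c₁ * t.1 + c₂ * t.2) fun t t' => by
    simp only [Prod.fst_add, Prod.snd_add]; ring
  let ℓ : ℂ × ℂ →+ ℂ := AddMonoidHom.mk'
    (fun t => μ₀ * ((starRingEnd ℂ) c₂ * t.1 - (starRingEnd ℂ) c₁ * t.2)) fun t t' => by
      simp only [Prod.fst_add, Prod.snd_add]; ring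
  rw [show PhiB m l c₁ c₂ μ₀ = _ from funext₂ (PhiB_eq m l c₁ c₂ μ₀)]
  exact isAction_of_shift (primitive m l) s ℓ
end

section
/- For every m ∈ ℕ and λ ∈ ℂ, the map τ_λ given by (t₁,t₂)·(x,y) = (x + λ·Σ_{i=0}^{m} (1/(m−i+1))·C(m, m−i)·t₁^{m−i+1}·yⁱ + t₂ , y + t₁) defines a simply transitive action of the additive group (ℂ², +) on ℂ²; that is, it is an action, and for all P, Q ∈ ℂ² there is a unique (t₁,t₂) ∈ ℂ² with (t₁,t₂)·P = Q. -/
open Finset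

/-- The map `τ_λ : (t₁,t₂)·(x,y) =
`(x + λ Σᵢ (1/(m-i+1)) C(m, m-i) t₁^(m-i+1) yⁱ + t₂ , y + t₁)`. -/
noncomputable def tauAct (m : ℕ) (lam : ℂ) (t z : ℂ × ℂ) : ℂ × ℂ :=
  (z.1 + lam * ∑ i ∈ Finset.range (m + 1),
      (1 / ((m - i + 1 : ℕ) : ℂ)) * ((m.choose (m - i) : ℕ) : ℂ) * t.1 ^ (m - i + 1) * z.2 ^ i
    + t.2,
   z.2 + t.1)

/-!
The sum in `τ_λ` is a telescoped binomial expansion: with `F y = λ y^(m+1) / (m+1)`,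
`t · (x, y) = (x + F (y + t₁) - F y + t₂, y + t₁)`. Hence the injective map
`ψ (x, y) = (y, x - F y)` satisfies `ψ (t · z) = t + ψ z`: it conjugates `τ_λ` to the
translation action of `ℂ²` on itself, which is simply transitive.
-/

theorem sum_range_div_mul_choose_mul_pow {K : Type*} [Field K] [CharZero K] (m : ℕ) (s y : K) :
    ∑ i ∈ range (m + 1),
      (1 / ((m - i + 1 : ℕ) : K)) * ((m.choose (m - i) : ℕ) : K) * s ^ (m - i + 1) * y ^ i
    = ((y + s) ^ (m + 1) - y ^ (m + 1)) / ((m + 1 : ℕ) : K) := by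
  rw [add_comm y, add_pow, sum_range_succ' _ (m + 1),
    eq_div_iff (Nat.cast_ne_zero.mpr m.succ_ne_zero), ← sum_range_reflect, sum_mul]
  simp only [pow_zero, one_mul, Nat.choose_zero_right, Nat.cast_one, mul_one, Nat.sub_zero,
    add_sub_cancel_right, add_tsub_cancel_right]
  refine sum_congr rfl fun j hj ↦ ?_
  have hjm : j ≤ m := Nat.lt_succ_iff.mp (mem_range.mp hj)
  rw [show m - (m - j) = j by omega, show m + 1 - (j + 1) = m - j by omega]
  have hchoose : ((m + 1 : ℕ) : K) * (m.choose j : K) =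
      ((m + 1).choose (j + 1) : K) * (j + 1 : ℕ) := by
    exact_mod_cast Nat.add_one_mul_choose_eq m j
  have hj1 : ((j + 1 : ℕ) : K) ≠ 0 := Nat.cast_ne_zero.mpr j.succ_ne_zero
  field_simp
  linear_combination s ^ (j + 1) * y ^ (m - j) * hchoose

theorem tauAct_eq (m : ℕ) (lam : ℂ) (t z : ℂ × ℂ) :
    tauAct m lam t z =
      (z.1 + lam * (((z.2 + t.1) ^ (m + 1) - z.2 ^ (m + 1)) / ((m + 1 : ℕ) : ℂ)) + t.2,
        z.2 + t.1) := by
  rw [tauAct, sum_range_div_mul_choose_mul_pow]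

noncomputable def tauStraighten (m : ℕ) (lam : ℂ) (z : ℂ × ℂ) : ℂ × ℂ :=
  (z.2, z.1 - lam * z.2 ^ (m + 1) / ((m + 1 : ℕ) : ℂ))

theorem tauStraighten_injective (m : ℕ) (lam : ℂ) : Function.Injective (tauStraighten m lam) := by
  rintro ⟨x, y⟩ ⟨x', y'⟩ h
  simp only [tauStraighten, Prod.mk.injEq] at h
  obtain ⟨rfl, hx⟩ := h
  simpa using hx

theorem tauStraighten_tauAct (m : ℕ) (lam : ℂ) (t z : ℂ × ℂ) :
    tauStraighten m lam (tauAct m lam t z) = t + tauStraighten m lam z := by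
  rw [tauAct_eq, tauStraighten, tauStraighten, Prod.ext_iff]
  constructor <;> simp only [Prod.fst_add, Prod.snd_add] <;> ring

theorem existsUnique_apply_eq_of_conj {G X : Type*} [AddGroup G] {Φ : G → X → X} {ψ : X → G}
    (hψ : Function.Injective ψ) (hΦ : ∀ t z, ψ (Φ t z) = t + ψ z) (P Q : X) : ∃! t, Φ t P = Q := by
  refine ⟨ψ Q - ψ P, hψ ?_, fun t ht ↦ ?_⟩
  · rw [hΦ, sub_add_cancel]
  · rw [← ht, hΦ, add_sub_cancel_right]

theorem isAction_of_conj {Φ : ℂ × ℂ → ℂ × ℂ → ℂ × ℂ} {ψ : ℂ × ℂ → ℂ × ℂ}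
    (hψ : Function.Injective ψ) (hΦ : ∀ t z, ψ (Φ t z) = t + ψ z) : IsAction Φ := by
  refine ⟨fun z ↦ hψ ?_, fun t t' z ↦ hψ ?_⟩
  · rw [hΦ, Prod.mk_zero_zero, zero_add]
  · rw [hΦ, hΦ, hΦ, add_assoc]

/-- for every `m` and `λ`, the map `τ_λ` defines a simply transitive action
of `(ℂ², +)` on `ℂ²`. -/
theorem tau_simply_transitive (m : ℕ) (lam : ℂ) :
    IsAction (tauAct m lam) ∧ ∀ P Q : ℂ × ℂ, ∃! t : ℂ × ℂ, tauAct m lam t P = Q :=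
  ⟨isAction_of_conj (tauStraighten_injective m lam) (tauStraighten_tauAct m lam),
    existsUnique_apply_eq_of_conj (tauStraighten_injective m lam) (tauStraighten_tauAct m lam)⟩
end

section
/- Let m ∈ ℕ and λ₀, …, λ_m ∈ ℂ, and define gᵢ(r) := Σ_{j=i}^{m} (λⱼ/(j−i+1))·C(j, j−i)·r^{j−i+1} for 0 ≤ i ≤ m. Then for every i with 0 ≤ i ≤ m and all r, r' ∈ ℂ, one has gᵢ(r + r') − gᵢ(r') = Σ_{j=i}^{m} C(j, j−i)·(r')^{j−i}·gⱼ(r). -/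
open Finset

/-!
Index `gᵢ` by `c = j - i`. Expanding `(r + r')^(a+1) - r'^(a+1)` binomially and swapping the
triangular double sum over (power of `r'`, power of `r`) puts both sides in the same shape, and the
coefficients agree by the trinomial revision `C(n,a) C(a,b) = C(n,b) C(n-b,a-b)` together with the
absorption identity `C(n+1,k) (n+1-k) = C(n,k) (n+1)`.
-/

theorem choose_add_div_mul_choose_eq {K : Type*} [Field K] [CharZero K] (i j c : ℕ) :
    ((i + j + c).choose (j + c) : K) / (j + c + 1 : ℕ) * ((j + c + 1).choose j : ℕ) =
      ((i + j).choose j : ℕ) * ((i + j + c).choose c : ℕ) / (c + 1 : ℕ) := by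
  have htrinomial := Nat.choose_mul (n := i + j + c) (Nat.le_add_left c j)
  have habsorb := Nat.choose_mul_succ_eq (j + c) j
  rw [Nat.add_sub_cancel, Nat.add_sub_cancel] at htrinomial
  rw [show j + c + 1 - j = c + 1 by omega, Nat.choose_symm_add] at habsorb
  have hnat : (i + j + c).choose (j + c) * (j + c + 1).choose j * (c + 1) =
      (i + j).choose j * (i + j + c).choose c * (j + c + 1) := by
    rw [mul_assoc, ← habsorb, ← mul_assoc, htrinomial, mul_comm ((i + j + c).choose c)]
  rw [div_mul_eq_mul_div, div_eq_div_iff (Nat.cast_ne_zero.mpr (j + c).succ_ne_zero)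
    (Nat.cast_ne_zero.mpr c.succ_ne_zero)]
  exact_mod_cast hnat

theorem add_pow_succ_sub_pow_succ {R : Type*} [CommRing R] (x y : R) (n : ℕ) :
    (x + y) ^ (n + 1) - y ^ (n + 1) =
      ∑ j ∈ range (n + 1), y ^ j * x ^ (n - j + 1) * ((n + 1).choose j : ℕ) := by
  rw [add_comm, add_pow, sum_range_succ, Nat.sub_self, pow_zero, Nat.choose_self, Nat.cast_one,
    mul_one, mul_one, add_sub_cancel_right]
  refine sum_congr rfl fun j hj => ?_
  rw [Nat.sub_add_comm (Nat.lt_succ_iff.mp (mem_range.mp hj))]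

theorem gfun_eq_sum_range (m : ℕ) (l : ℕ → ℂ) (i : ℕ) (r : ℂ) :
    gfun m l i r =
      ∑ c ∈ range (m + 1 - i),
        l (i + c) / (c + 1 : ℕ) * ((i + c).choose c : ℕ) * r ^ (c + 1) := by
  rw [gfun, ← Ico_add_one_right_eq_Icc, sum_Ico_eq_sum_range]
  simp only [Nat.add_sub_cancel_left]

theorem g_addition_identity_general (m : ℕ) (l : ℕ → ℂ) (i : ℕ) (r r' : ℂ) :
    gfun m l i (r + r') - gfun m l i r' =
      ∑ j ∈ Finset.Icc i m, ((j.choose (j - i) : ℕ) : ℂ) * r' ^ (j - i) * gfun m l j r := by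
  set w : ℕ → ℂ := fun a => l (i + a) / (a + 1 : ℕ) * ((i + a).choose a : ℕ)
  set f : ℕ → ℕ → ℂ := fun j c =>
    w (j + c) * (r' ^ j * r ^ (c + 1) * ((j + c + 1).choose j : ℕ))
  calc gfun m l i (r + r') - gfun m l i r'
      = ∑ a ∈ range (m + 1 - i), ∑ j ∈ range (a + 1), f j (a - j) := by
        simp only [gfun_eq_sum_range, ← sum_sub_distrib, ← mul_sub, add_pow_succ_sub_pow_succ,
          mul_sum]
        refine sum_congr rfl fun a _ => sum_congr rfl fun j hj => ?_
        simp only [f, w]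
        rw [Nat.add_sub_cancel' (Nat.lt_succ_iff.mp (mem_range.mp hj))]
    _ = ∑ j ∈ range (m + 1 - i), ∑ c ∈ range (m + 1 - i - j), f j c :=
        sum_range_diag_flip _ f
    _ = _ := by
        rw [← Ico_add_one_right_eq_Icc, sum_Ico_eq_sum_range]
        refine sum_congr rfl fun j _ => ?_
        rw [gfun_eq_sum_range, mul_sum, Nat.add_sub_cancel_left, Nat.sub_sub]
        refine sum_congr rfl fun c _ => ?_
        simp only [f, w, ← add_assoc]
        linear_combination
          l (i + j + c) * r' ^ j * r ^ (c + 1) * choose_add_div_mul_choose_eq (K := ℂ) i j c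

/-- `gᵢ(r + r') − gᵢ(r') = Σ_{j=i}^{m} C(j, j−i)·(r')^{j−i}·gⱼ(r)`. -/
theorem g_addition_identity (m : ℕ) (l : ℕ → ℂ) (i : ℕ) (him : i ≤ m) (r r' : ℂ) :
    gfun m l i (r + r') - gfun m l i r' =
      ∑ j ∈ Finset.Icc i m, ((j.choose (j - i) : ℕ) : ℂ) * r' ^ (j - i) * gfun m l j r :=
  g_addition_identity_general m l i r r'
end

section
/- Let m ∈ ℕ and let g₀, …, g_m ∈ ℂ[r] be polynomials with gᵢ(0) = 0 for all i, satisfying Σ_{i=0}^{m} (gᵢ(r + r') − gᵢ(r'))·xⁱ = Σ_{i=0}^{m} gᵢ(r)·(x + r')ⁱ for all x, r, r' ∈ ℂ. Then, setting λᵢ := gᵢ'(0) for 0 ≤ i ≤ m (where gᵢ' denotes the derivative), one has gᵢ(r) = Σ_{j=i}^{m} (λⱼ/(j−i+1))·C(j, j−i)·r^{j−i+1} for every 0 ≤ i ≤ m and all r ∈ ℂ. -/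
open Finset

/-!
Comparing the coefficients of `xⁱ` in the functional equation gives the shift identity
`gᵢ(r + r') - gᵢ(r') = ∑_{j ≥ i} gⱼ(r) C(j, i) r'^(j-i)`. Differentiating in `r` at `r = 0`
yields `gᵢ'(r') = ∑_{j ≥ i} λⱼ C(j, i) r'^(j-i)`, and since `gᵢ(0) = 0` the polynomial `gᵢ`
is the antiderivative of this expression vanishing at `0`, which is the claimed formula.
-/

open Polynomial

namespace Polynomial

variable {R : Type*} [CommRing R]

theorem eq_of_derivative_eq_of_eval_zero_eq [IsDomain R] [CharZero R] {p q : R[X]}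
    (hd : derivative p = derivative q) (h0 : p.eval 0 = q.eval 0) : p = q := by
  have hC := eq_C_of_derivative_eq_zero (p := p - q) (by rw [derivative_sub, hd, sub_self])
  rwa [coeff_zero_eq_eval_zero, eval_sub, h0, sub_self, map_zero, sub_eq_zero] at hC

theorem coeff_eq_sum_of_sum_mul_pow_eq_sum_mul_add_pow [IsDomain R] [Infinite R] {m i : ℕ}
    (hi : i ≤ m) {a b : ℕ → R} {c : R}
    (h : ∀ x, ∑ k ∈ range (m + 1), a k * x ^ k = ∑ k ∈ range (m + 1), b k * (x + c) ^ k) :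
    a i = ∑ j ∈ Icc i m, b j * (c ^ (j - i) * (j.choose i : R)) := by
  have hpoly : ∑ k ∈ range (m + 1), C (a k) * X ^ k =
      ∑ k ∈ range (m + 1), C (b k) * (X + C c) ^ k :=
    Polynomial.funext fun x => by simpa [eval_finsetSum] using h x
  have hcoeff := congrArg (coeff · i) hpoly
  simp only [finsetSum_coeff, coeff_C_mul, coeff_X_pow, coeff_X_add_C_pow, mul_ite, mul_one,
    mul_zero, sum_ite_eq, mem_range, Nat.lt_succ_of_le hi, if_true] at hcoeff
  rw [hcoeff]
  refine (sum_subset (fun k hk => ?_) fun k hk hk' => ?_).symm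
  · simp only [mem_Icc, mem_range] at hk ⊢
    omega
  · simp only [mem_Icc, mem_range] at hk hk'
    simp [Nat.choose_eq_zero_of_lt (show k < i by omega)]

theorem eval_derivative_eq_of_eval_add_sub_eq [IsDomain R] [Infinite R] {ι : Type*}
    {s : Finset ι} {f : R[X]} {g : ι → R[X]} {c : ι → R} {a : R}
    (h : ∀ r, f.eval (r + a) - f.eval a = ∑ j ∈ s, (g j).eval r * c j) :
    (derivative f).eval a = ∑ j ∈ s, (derivative (g j)).eval 0 * c j := by
  have hpoly : f.comp (X + C a) - C (f.eval a) = ∑ j ∈ s, g j * C (c j) :=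
    Polynomial.funext fun r => by simpa [eval_finsetSum] using h r
  have hd := congrArg (fun p => (derivative p).eval 0) hpoly
  simpa [derivative_comp, eval_finsetSum] using hd

end Polynomial

theorem eval_eq_gfun_of_eval_derivative_eq {m i : ℕ} {l : ℕ → ℂ} {p : ℂ[X]}
    (h0 : p.eval 0 = 0)
    (hd : ∀ r, (derivative p).eval r =
      ∑ j ∈ Icc i m, l j * (r ^ (j - i) * (j.choose i : ℂ)))
    (r : ℂ) : p.eval r = gfun m l i r := by
  set P : ℂ[X] := ∑ j ∈ Icc i m,
    C (l j / ((j - i + 1 : ℕ) : ℂ) * ((j.choose (j - i) : ℕ) : ℂ)) * X ^ (j - i + 1) with hP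
  have hPd : derivative P = derivative p := Polynomial.funext fun r => by
    rw [hd, hP, map_sum, eval_finsetSum]
    refine sum_congr rfl fun j hj => ?_
    rw [Nat.choose_symm (mem_Icc.mp hj).1]
    simp only [derivative_C_mul, derivative_X_pow, eval_mul, eval_C, eval_pow,
      eval_X, Nat.add_sub_cancel]
    field_simp
  have hPp : p = P :=
    eq_of_derivative_eq_of_eval_zero_eq hPd.symm (by simp [h0, hP, eval_finsetSum])
  simp [hPp, hP, gfun, eval_finsetSum]

/-- if `g₀, …, g_m ∈ ℂ[r]` vanish at `0` and satisfy
`Σᵢ (gᵢ(r+r') − gᵢ(r'))·xⁱ = Σᵢ gᵢ(r)·(x+r')ⁱ` for all `x, r, r' ∈ ℂ`, then, with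
`λᵢ := gᵢ'(0)`, one has `gᵢ(r) = Σ_{j=i}^{m} (λⱼ/(j−i+1))·C(j,j−i)·r^{j−i+1}`. -/
theorem g_functional_equation_solution (m : ℕ) (G : ℕ → Polynomial ℂ)
    (h0 : ∀ i ≤ m, (G i).eval 0 = 0)
    (heq : ∀ x r r' : ℂ,
      ∑ i ∈ Finset.range (m + 1), ((G i).eval (r + r') - (G i).eval r') * x ^ i =
        ∑ i ∈ Finset.range (m + 1), (G i).eval r * (x + r') ^ i) :
    ∀ i ≤ m, ∀ r : ℂ,
      (G i).eval r = gfun m (fun j => (Polynomial.derivative (G j)).eval 0) i r := by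
  intro i hi
  have shift : ∀ r r' : ℂ, (G i).eval (r + r') - (G i).eval r' =
      ∑ j ∈ Icc i m, (G j).eval r * (r' ^ (j - i) * (j.choose i : ℂ)) := fun r r' =>
    coeff_eq_sum_of_sum_mul_pow_eq_sum_mul_add_pow hi (heq · r r')
  exact eval_eq_gfun_of_eval_derivative_eq (h0 i hi) fun r' =>
    eval_derivative_eq_of_eval_add_sub_eq (shift · r')
end

section
/- Let m ∈ ℕ, (c₁, c₂) ∈ ℂ² with (c₁, c₂) ≠ (0,0), and let b₀, …, b_m ∈ ℂ[t₁, t₂] satisfy Σ_{i=0}^{m} (bᵢ(t₁ + t₁', t₂ + t₂') − bᵢ(t₁', t₂'))·yⁱ = Σ_{i=0}^{m} bᵢ(t₁, t₂)·(y + c₁t₁' + c₂t₂')ⁱ for all (t₁,t₂), (t₁',t₂') ∈ ℂ² and all y ∈ ℂ. Then there exist λ₀, …, λ_m, μ₀ ∈ ℂ such that bᵢ(t₁,t₂) = gᵢ(c₁t₁ + c₂t₂) for 1 ≤ i ≤ m and b₀(t₁,t₂) = g₀(c₁t₁ + c₂t₂) + μ₀(c̄₂t₁ − c̄₁t₂),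 where c̄₁, c̄₂ are the complex conjugates of c₁, c₂ and gᵢ(r) := Σ_{j=i}^{m} (λⱼ/(j−i+1))·C(j, j−i)·r^{j−i+1}. -/
open Finset

/-! Write `s t = c₁ t₁ + c₂ t₂` and fix `v` with `s v = 1`; `(c₂, -c₁)` spans the kernel of `s`.
For `k` in the kernel the identity says exactly that every `bᵢ` is additive in the direction `k`.
Taking `y = 0` and `t` in the kernel then gives `∑ᵢ bᵢ(t) wⁱ = b₀(t)` for every `w`, so `bᵢ`
vanishes on the kernel for `i ≥ 1`, while `b₀` is additive there, hence linear (it is a polynomial).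
On the line through `v`, the identity at `y = 0` says `taylor r q - q = ∑ᵢ bᵢ(r v) Xⁱ` for the
polynomial `q(r) = b₀(r v)`. Hence `bᵢ(r v)` is the `i`-th Hasse derivative of `q` at `r` minus
its value at `0`, and `deg q ≤ m + 1`; with `λⱼ = (j + 1) q_{j+1}` this is `gᵢ(r)`.
Splitting `t = k + s(t) v` with `k` in the kernel finishes the proof. -/

section

variable {R : Type*} [CommRing R] [IsDomain R]

open Polynomial in
theorem eq_of_forall_sum_mul_pow_eq [Infinite R] {n : ℕ} {f g : ℕ → R}
    (h : ∀ y, ∑ i ∈ range n, f i * y ^ i = ∑ i ∈ range n, g i * y ^ i) {i : ℕ} (hi : i < n) :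
    f i = g i := by
  have hP : ∑ j ∈ range n, C (f j) * X ^ j = ∑ j ∈ range n, C (g j) * X ^ j :=
    funext fun y => by simpa [eval_finsetSum] using h y
  simpa [finsetSum_coeff, coeff_C_mul_X_pow, hi] using congrArg (coeff · i) hP

namespace Polynomial

theorem eq_C_mul_X_of_eval_add [CharZero R] {p : R[X]}
    (hp : ∀ x y, p.eval (x + y) = p.eval x + p.eval y) : p = C (p.eval 1) * X := by
  have hnat : ∀ n : ℕ, p.eval (n : R) = n * p.eval 1 := by
    intro n
    induction n with
    | zero => simpa using hp 0 0
    | succ k ih => push_cast; rw [hp, ih]; ring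
  refine sub_eq_zero.mp (eq_zero_of_infinite_isRoot _ ?_)
  refine Set.infinite_of_injective_forall_mem Nat.cast_injective fun n => ?_
  simp [hnat, mul_comm (p.eval 1)]

theorem coeff_succ_eq_zero_of_hasseDeriv_eval_eq [CharZero R] {q : R[X]} {n : ℕ}
    (h : ∀ r, (hasseDeriv n q).eval r = q.coeff n) : q.coeff (n + 1) = 0 := by
  have hC : hasseDeriv n q = C (q.coeff n) := funext fun r => by simp [h]
  have h1 := congrArg (coeff · 1) hC
  simp only [hasseDeriv_coeff, coeff_C, one_ne_zero, if_false, add_comm 1 n] at h1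
  simpa [Nat.choose_succ_self_right, Nat.cast_add_one_ne_zero] using h1

end Polynomial

end

theorem exists_eval_eq_ev_smul (p : MvPolynomial (Fin 2) ℂ) (v : ℂ × ℂ) :
    ∃ q : Polynomial ℂ, ∀ z, q.eval z = ev p (z • v) := by
  refine ⟨MvPolynomial.eval₂ Polynomial.C ![Polynomial.C v.1 * Polynomial.X,
    Polynomial.C v.2 * Polynomial.X] p, fun z => ?_⟩
  rw [MvPolynomial.polynomial_eval_eval₂, ev]
  congr 1
  · ext; simp
  · funext i
    fin_cases i <;> simp <;> ring

def IsShiftCocycle {R : Type*} [CommRing R] (m : ℕ) (c₁ c₂ : R) (b : ℕ → R × R → R) : Prop :=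
  ∀ (t t' : R × R) (y : R), ∑ i ∈ range (m + 1), (b i (t + t') - b i t') * y ^ i =
    ∑ i ∈ range (m + 1), b i t * (y + c₁ * t'.1 + c₂ * t'.2) ^ i

namespace IsShiftCocycle

open Polynomial

variable {R : Type*} [CommRing R] {m : ℕ} {c₁ c₂ : R} {b : ℕ → R × R → R}

theorem apply_zero_add_sub_eq_sum (H : IsShiftCocycle m c₁ c₂ b) (t t' : R × R) :
    b 0 (t + t') - b 0 t' = ∑ i ∈ range (m + 1), b i t * (c₁ * t'.1 + c₂ * t'.2) ^ i := by
  simpa [sum_range_succ' _ m, add_assoc] using H t t' 0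

variable [IsDomain R]

theorem map_add_of_mem_ker [Infinite R] (H : IsShiftCocycle m c₁ c₂ b) {k : R × R}
    (hk : c₁ * k.1 + c₂ * k.2 = 0) {i : ℕ} (hi : i ≤ m) (t : R × R) :
    b i (k + t) = b i k + b i t := by
  have h := eq_of_forall_sum_mul_pow_eq (f := fun j => b j (t + k) - b j k)
    (g := fun j => b j t) (fun y => by rw [H t k y, add_assoc, hk, add_zero]) (Nat.lt_succ_of_le hi)
  rw [add_comm k]
  linear_combination h

theorem eq_zero_of_mem_ker [Infinite R] (H : IsShiftCocycle m c₁ c₂ b) {v : R × R}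
    (hv : c₁ * v.1 + c₂ * v.2 = 1) {k : R × R} (hk : c₁ * k.1 + c₂ * k.2 = 0) {i : ℕ}
    (hi₁ : 1 ≤ i) (hi : i ≤ m) : b i k = 0 := by
  have hsum : ∀ w : R, ∑ j ∈ range (m + 1), b j k * w ^ j =
      ∑ j ∈ range (m + 1), (if j = 0 then b 0 k else 0) * w ^ j := by
    intro w
    have hw : c₁ * (w • v).1 + c₂ * (w • v).2 = w := by
      simp only [Prod.smul_fst, Prod.smul_snd, smul_eq_mul]
      linear_combination w * hv
    rw [← hw, ← H.apply_zero_add_sub_eq_sum, H.map_add_of_mem_ker hk (Nat.zero_le m)]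
    simp
  simpa [Nat.one_le_iff_ne_zero.mp hi₁] using
    eq_of_forall_sum_mul_pow_eq hsum (Nat.lt_succ_of_le hi)

theorem apply_smul_eq_mul_of_mem_ker [CharZero R] (H : IsShiftCocycle m c₁ c₂ b) {w : R × R}
    (hw : c₁ * w.1 + c₂ * w.2 = 0) {q : R[X]} (hq : ∀ z, q.eval z = b 0 (z • w)) (z : R) :
    b 0 (z • w) = q.eval 1 * z := by
  have hadd : ∀ x y, q.eval (x + y) = q.eval x + q.eval y := by
    intro x y
    have hx : c₁ * (x • w).1 + c₂ * (x • w).2 = 0 := by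
      simp only [Prod.smul_fst, Prod.smul_snd, smul_eq_mul]
      linear_combination x * hw
    rw [hq, hq, hq, add_smul, H.map_add_of_mem_ker hx (Nat.zero_le m)]
  rw [← hq, eq_C_mul_X_of_eval_add hadd]
  simp

theorem taylor_sub_self [Infinite R] (H : IsShiftCocycle m c₁ c₂ b) {v : R × R}
    (hv : c₁ * v.1 + c₂ * v.2 = 1) {q : R[X]} (hq : ∀ z, q.eval z = b 0 (z • v)) (r : R) :
    taylor r q - q = ∑ i ∈ range (m + 1), C (b i (r • v)) * X ^ i := by
  refine funext fun z => ?_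
  have hz : c₁ * (z • v).1 + c₂ * (z • v).2 = z := by
    simp only [Prod.smul_fst, Prod.smul_snd, smul_eq_mul]
    linear_combination z * hv
  simp only [eval_sub, taylor_eval, eval_finsetSum, eval_mul, eval_C, eval_pow, eval_X]
  rw [hq, hq, add_comm z r, add_smul, H.apply_zero_add_sub_eq_sum, hz]

theorem apply_smul_eq_hasseDeriv [Infinite R] (H : IsShiftCocycle m c₁ c₂ b) {v : R × R}
    (hv : c₁ * v.1 + c₂ * v.2 = 1) {q : R[X]} (hq : ∀ z, q.eval z = b 0 (z • v)) {i : ℕ}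
    (hi : i ≤ m) (r : R) : b i (r • v) = (hasseDeriv i q).eval r - q.coeff i := by
  simpa [← taylor_coeff, finsetSum_coeff, coeff_C_mul_X_pow, Nat.lt_succ_of_le hi] using
    (congrArg (coeff · i) (H.taylor_sub_self hv hq r)).symm

theorem natDegree_le [CharZero R] (H : IsShiftCocycle m c₁ c₂ b) {v : R × R}
    (hv : c₁ * v.1 + c₂ * v.2 = 1) {q : R[X]} (hq : ∀ z, q.eval z = b 0 (z • v)) :
    q.natDegree ≤ m + 1 := by
  refine natDegree_le_iff_coeff_eq_zero.mpr fun n hn => ?_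
  obtain ⟨j, rfl⟩ : ∃ j, n = j + 1 := ⟨n - 1, by omega⟩
  refine coeff_succ_eq_zero_of_hasseDeriv_eval_eq fun r => ?_
  have h := congrArg (coeff · j) (H.taylor_sub_self hv hq r)
  simp only [coeff_sub, taylor_coeff, finsetSum_coeff, coeff_C_mul_X_pow] at h
  rw [sum_eq_zero fun i hi => if_neg (by simp at hi; omega)] at h
  exact sub_eq_zero.mp h

end IsShiftCocycle

open Polynomial in
theorem gfun_eq_hasseDeriv_eval_sub_coeff {m i : ℕ} {q : ℂ[X]} (hq : q.natDegree ≤ m + 1)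
    (hi : i ≤ m) (r : ℂ) :
    gfun m (fun j => ((j + 1 : ℕ) : ℂ) * q.coeff (j + 1)) i r =
      (hasseDeriv i q).eval r - q.coeff i := by
  have hdeg : (hasseDeriv i q).natDegree < m + 1 - i + 1 :=
    (natDegree_hasseDeriv_le q i).trans_lt (by omega)
  rw [eval_eq_sum_range' hdeg, sum_range_succ', gfun, ← Ico_add_one_right_eq_Icc,
    sum_Ico_eq_sum_range]
  simp only [hasseDeriv_coeff, zero_add, Nat.choose_self, Nat.cast_one, one_mul, pow_zero,
    mul_one, add_sub_cancel_right, Nat.add_sub_cancel_left]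
  refine sum_congr rfl fun k _ => ?_
  have hchoose : ((i + k + 1 : ℕ) : ℂ) * ((i + k).choose k : ℕ) =
      ((k + 1 + i).choose i : ℕ) * (k + 1 : ℕ) := by
    rw [← Nat.choose_symm_add (a := k + 1), show k + 1 + i = i + k + 1 by omega]
    exact_mod_cast Nat.add_one_mul_choose_eq (i + k) k
  rw [show k + 1 + i = i + k + 1 by omega] at hchoose ⊢
  field_simp
  linear_combination q.coeff (i + k + 1) * r ^ (k + 1) * hchoose

theorem Complex.conj_mul_add_conj_mul_ne_zero {c₁ c₂ : ℂ} (hc : (c₁, c₂) ≠ (0, 0)) :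
    starRingEnd ℂ c₁ * c₁ + starRingEnd ℂ c₂ * c₂ ≠ 0 := by
  rw [Complex.conj_mul', Complex.conj_mul', ← Complex.ofReal_pow, ← Complex.ofReal_pow,
    ← Complex.ofReal_add, Complex.ofReal_ne_zero]
  contrapose! hc
  rw [add_eq_zero_iff_of_nonneg (sq_nonneg _) (sq_nonneg _), sq_eq_zero_iff, sq_eq_zero_iff,
    norm_eq_zero, norm_eq_zero] at hc
  rw [hc.1, hc.2]

theorem Complex.prod_eq_smul_add_smul {c₁ c₂ N : ℂ}
    (hN_def : N = starRingEnd ℂ c₁ * c₁ + starRingEnd ℂ c₂ * c₂) (hN : N ≠ 0) (t : ℂ × ℂ) :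
    t = ((starRingEnd ℂ c₂ * t.1 - starRingEnd ℂ c₁ * t.2) / N) • (c₂, -c₁) +
      (c₁ * t.1 + c₂ * t.2) • (starRingEnd ℂ c₁ / N, starRingEnd ℂ c₂ / N) := by
  ext <;> simp only [Prod.fst_add, Prod.snd_add, Prod.smul_fst, Prod.smul_snd, smul_eq_mul]
    <;> field_simp
  · linear_combination t.1 * hN_def
  · linear_combination t.2 * hN_def

/-- if `b₀, …, b_m ∈ ℂ[t₁,t₂]` satisfy
`Σᵢ (bᵢ(t+t') − bᵢ(t'))·yⁱ = Σᵢ bᵢ(t)·(y + c₁t₁' + c₂t₂')ⁱ` with `(c₁,c₂) ≠ (0,0)`, then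
there exist `λ₀, …, λ_m, μ₀` such that `bᵢ = gᵢ(c₁t₁+c₂t₂)` for `1 ≤ i ≤ m` and
`b₀ = g₀(c₁t₁+c₂t₂) + μ₀(c̄₂t₁ − c̄₁t₂)`. -/
theorem b_coefficients_form (m : ℕ) (c₁ c₂ : ℂ) (hc : (c₁, c₂) ≠ (0, 0))
    (Bc : ℕ → MvPolynomial (Fin 2) ℂ)
    (heq : ∀ (t t' : ℂ × ℂ) (y : ℂ),
      ∑ i ∈ Finset.range (m + 1), (ev (Bc i) (t + t') - ev (Bc i) t') * y ^ i =
        ∑ i ∈ Finset.range (m + 1), ev (Bc i) t * (y + c₁ * t'.1 + c₂ * t'.2) ^ i) :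
    ∃ (l : ℕ → ℂ) (μ₀ : ℂ),
      (∀ t : ℂ × ℂ, ev (Bc 0) t =
          gfun m l 0 (c₁ * t.1 + c₂ * t.2) +
            μ₀ * ((starRingEnd ℂ) c₂ * t.1 - (starRingEnd ℂ) c₁ * t.2)) ∧
      (∀ i, 1 ≤ i → i ≤ m →
        ∀ t : ℂ × ℂ, ev (Bc i) t = gfun m l i (c₁ * t.1 + c₂ * t.2)) := by
  have H : IsShiftCocycle m c₁ c₂ fun i => ev (Bc i) := heq
  obtain ⟨N, hN_def⟩ : ∃ N, N = starRingEnd ℂ c₁ * c₁ + starRingEnd ℂ c₂ * c₂ := ⟨_, rfl⟩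
  have hN : N ≠ 0 := hN_def ▸ Complex.conj_mul_add_conj_mul_ne_zero hc
  set v : ℂ × ℂ := (starRingEnd ℂ c₁ / N, starRingEnd ℂ c₂ / N) with hv_def
  have hv : c₁ * v.1 + c₂ * v.2 = 1 := by
    rw [hv_def]
    field_simp
    linear_combination -hN_def
  have hw : c₁ * c₂ + c₂ * -c₁ = 0 := by ring
  obtain ⟨q, hq⟩ := exists_eval_eq_ev_smul (Bc 0) v
  obtain ⟨q₀, hq₀⟩ := exists_eval_eq_ev_smul (Bc 0) (c₂, -c₁)
  have hker : ∀ z : ℂ, c₁ * (z • (c₂, -c₁)).1 + c₂ * (z • (c₂, -c₁)).2 = 0 := fun z => by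
    simp only [Prod.smul_fst, Prod.smul_snd, smul_eq_mul]; ring
  have hg : ∀ i ≤ m, ∀ r,
      ev (Bc i) (r • v) = gfun m (fun j => (j + 1 : ℕ) * q.coeff (j + 1)) i r := fun i hi r => by
    rw [H.apply_smul_eq_hasseDeriv hv hq hi,
      gfun_eq_hasseDeriv_eval_sub_coeff (H.natDegree_le hv hq) hi]
  refine ⟨fun j => (j + 1 : ℕ) * q.coeff (j + 1), q₀.eval 1 / N, fun t => ?_, fun i hi₁ hi t => ?_⟩
  · conv_lhs => rw [Complex.prod_eq_smul_add_smul hN_def hN t]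
    rw [H.map_add_of_mem_ker (hker _) (Nat.zero_le m), H.apply_smul_eq_mul_of_mem_ker hw hq₀,
      hg 0 (Nat.zero_le m)]
    ring
  · conv_lhs => rw [Complex.prod_eq_smul_add_smul hN_def hN t]
    rw [H.map_add_of_mem_ker (hker _) hi, H.eq_zero_of_mem_ker hv (hker _) hi₁ hi, zero_add,
      hg i hi]
end

section
/- Let m ∈ ℕ, (c₁, c₂) ∈ ℂ² with (c₁,c₂) ≠ (0,0), μ ∈ ℂ with μ ≠ 0, and λ₀, …, λ_m ∈ ℂ; define gᵢ(r) := Σ_{j=i}^{m} (λⱼ/(j−i+1))·C(j, j−i)·r^{j−i+1} for 0 ≤ i ≤ m, and let σ be the action of (ℂ², +) on ℂ² given by (t₁,t₂)·_σ(x,y) = (x + Σ_{i=0}^{m} gᵢ(c₁t₁ + c₂t₂)·yⁱ + μ(c̄₂t₁ − c̄₁t₂) , y + c₁t₁ + c₂t₂), where c̄₁, c̄₂ are the complex conjugates of c₁, c₂. Then there exists a ℂ-linear automorphism T of ℂ² such that the action σ' defined by σ'(t, z) := σ(T(t), z) is given by (t₁,t₂)·_{σ'}(x,y) = (x + Σ_{i=0}^{m}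 gᵢ(t₁)·yⁱ + t₂ , y + t₁). -/
open Finset

/-- The action `σ : (t₁,t₂)·(x,y) =
`(x + Σᵢ gᵢ(c₁t₁+c₂t₂) yⁱ + μ(c̄₂t₁ − c̄₁t₂) , y + c₁t₁ + c₂t₂)`. -/
noncomputable def sigmaFull (m : ℕ) (l : ℕ → ℂ) (c₁ c₂ μ : ℂ) (t z : ℂ × ℂ) : ℂ × ℂ :=
  (z.1 + ∑ i ∈ Finset.range (m + 1), gfun m l i (c₁ * t.1 + c₂ * t.2) * z.2 ^ i +
      μ * ((starRingEnd ℂ) c₂ * t.1 - (starRingEnd ℂ) c₁ * t.2),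
   z.2 + c₁ * t.1 + c₂ * t.2)

/-! The action `σ` depends on `t` only through the linear change of parameters
`t ↦ (c₁t₁ + c₂t₂, μ(c̄₂t₁ − c̄₁t₂))`, whose determinant is `-μ(|c₁|² + |c₂|²) ≠ 0`;
`T` is its inverse. -/

open ComplexConjugate

theorem Complex.mul_conj_add_mul_conj_ne_zero {c₁ c₂ : ℂ} (hc : (c₁, c₂) ≠ (0, 0)) :
    c₁ * conj c₁ + c₂ * conj c₂ ≠ 0 := by
  rw [Complex.mul_conj, Complex.mul_conj, ← Complex.ofReal_add, Complex.ofReal_ne_zero]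
  intro h
  rw [add_eq_zero_iff_of_nonneg (Complex.normSq_nonneg _) (Complex.normSq_nonneg _),
    Complex.normSq_eq_zero, Complex.normSq_eq_zero] at h
  exact hc (Prod.ext h.1 h.2)

noncomputable def sigmaParam (c₁ c₂ μ : ℂ) : (ℂ × ℂ) →ₗ[ℂ] ℂ × ℂ :=
  (c₁ • LinearMap.fst ℂ ℂ ℂ + c₂ • LinearMap.snd ℂ ℂ ℂ).prod
    (μ • (conj c₂ • LinearMap.fst ℂ ℂ ℂ - conj c₁ • LinearMap.snd ℂ ℂ ℂ))

theorem sigmaParam_apply (c₁ c₂ μ : ℂ) (t : ℂ × ℂ) :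
    sigmaParam c₁ c₂ μ t = (c₁ * t.1 + c₂ * t.2, μ * (conj c₂ * t.1 - conj c₁ * t.2)) := by
  simp [sigmaParam]

theorem sigmaParam_injective {c₁ c₂ μ : ℂ} (hc : (c₁, c₂) ≠ (0, 0)) (hμ : μ ≠ 0) :
    Function.Injective (sigmaParam c₁ c₂ μ) := by
  refine (injective_iff_map_eq_zero _).2 fun t ht ↦ ?_
  rw [sigmaParam_apply, Prod.mk_eq_zero, mul_eq_zero, or_iff_right hμ] at ht
  obtain ⟨h₁, h₂⟩ := ht
  have hn := Complex.mul_conj_add_mul_conj_ne_zero hc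
  refine Prod.ext ((mul_eq_zero.1 ?_).resolve_left hn) ((mul_eq_zero.1 ?_).resolve_left hn)
  · linear_combination conj c₁ * h₁ + c₂ * h₂
  · linear_combination conj c₂ * h₁ - c₁ * h₂

theorem sigmaFull_eq_sigmaParam (m : ℕ) (l : ℕ → ℂ) (c₁ c₂ μ : ℂ) (t z : ℂ × ℂ) :
    sigmaFull m l c₁ c₂ μ t z =
      (z.1 + ∑ i ∈ Finset.range (m + 1), gfun m l i (sigmaParam c₁ c₂ μ t).1 * z.2 ^ i +
        (sigmaParam c₁ c₂ μ t).2, z.2 + (sigmaParam c₁ c₂ μ t).1) := by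
  rw [sigmaParam_apply, sigmaFull, add_assoc z.2]

/-- there is a `ℂ`-linear automorphism `T` of `ℂ²` such that the
reparametrized action `σ'(t, z) := σ(T t, z)` is given by
`(t₁,t₂)·(x,y) = (x + Σᵢ gᵢ(t₁) yⁱ + t₂ , y + t₁)`. -/
theorem sigma_normal_form (m : ℕ) (l : ℕ → ℂ) (c₁ c₂ : ℂ) (hc : (c₁, c₂) ≠ (0, 0))
    (μ : ℂ) (hμ : μ ≠ 0) :
    ∃ T : (ℂ × ℂ) ≃ₗ[ℂ] ℂ × ℂ,
      ∀ t z : ℂ × ℂ,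
        sigmaFull m l c₁ c₂ μ (T t) z =
          (z.1 + ∑ i ∈ Finset.range (m + 1), gfun m l i t.1 * z.2 ^ i + t.2, z.2 + t.1) := by
  let L := LinearEquiv.ofInjectiveEndo (sigmaParam c₁ c₂ μ) (sigmaParam_injective hc hμ)
  refine ⟨L.symm, fun t z ↦ ?_⟩
  have hLt : sigmaParam c₁ c₂ μ (L.symm t) = t := L.apply_symm_apply t
  rw [sigmaFull_eq_sigmaParam, hLt]
end

section
/- Let (ω₀, …, ω_{n+1}) be a key sequence, with e_k := gcd(|ω₀|, …, |ω_k|) and α_k := e_{k−1}/e_k. Then for each k with 1 ≤ k ≤ n, there exist unique integers β_{k,0}, β_{k,1}, …, β_{k,k−1} with 0 ≤ β_{k,j} < α_j for all 1 ≤ j ≤ k−1 such that α_k·ω_k = β_{k,0}·ω₀ + β_{k,1}·ω₁ + ⋯ + β_{k,k−1}·ω_{k−1}. Moreover, if the key sequence is algebraic, then β_{k,0} ≥ 0 for each k. -/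
open Finset

/-- `eSeq ω k = gcd(|ω₀|, …, |ω_k|)`. -/
def eSeq (ω : ℕ → ℤ) (k : ℕ) : ℕ :=
  (Finset.range (k + 1)).gcd fun i => (ω i).natAbs

/-- `αSeq ω k = e_{k-1} / e_k`. -/
def αSeq (ω : ℕ → ℤ) (k : ℕ) : ℕ :=
  eSeq ω (k - 1) / eSeq ω k

/-!
The coefficients `β_{k,j}` are the digits of `α_k ω_k` in a mixed-radix system. Since
`gcd(e_k, ω_{k+1}) = e_{k+1}` and `e_k = α_{k+1} e_{k+1}`, a multiple `x` of `e_{k+1}` is congruent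
modulo `e_k` to `r ω_{k+1}` for exactly one `0 ≤ r < α_{k+1}`; peeling off the last digit this way
and recursing gives existence and uniqueness of a representation `x = Σ_{j ≤ k} β_j ω_j` with
`0 ≤ β_j < α_j` for `j ≥ 1`. In the algebraic case, the digits of any `ℕ`-combination of the `ω_j`
stay in `ℕ` when a carry `α_j ω_j = Σ_{i<j} c_i ω_i` with `c_i ∈ ℕ` is pushed down, so by
uniqueness `β_{k,0} ≥ 0`.
-/

namespace KeySequence

def IsReduced (ω : ℕ → ℤ) {k : ℕ} (β : Fin k → ℤ) : Prop :=
  ∀ j : Fin k, 1 ≤ (j : ℕ) → 0 ≤ β j ∧ β j < (αSeq ω (j : ℕ) : ℤ)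

def IsAlgebraicUpTo (ω : ℕ → ℤ) (n : ℕ) : Prop :=
  ∀ k, 1 ≤ k → k ≤ n → ∃ c : Fin k → ℕ, (αSeq ω k : ℤ) * ω k = ∑ j : Fin k, (c j : ℤ) * ω (j : ℕ)

variable {ω : ℕ → ℤ}

lemma eSeq_zero : eSeq ω 0 = (ω 0).natAbs := by
  simp [eSeq]

lemma eSeq_succ (k : ℕ) : eSeq ω (k + 1) = Int.gcd (ω (k + 1)) (eSeq ω k) := by
  rw [eSeq, eSeq, Finset.range_add_one, Finset.gcd_insert]
  rfl

lemma eSeq_pos (h0 : ω 0 ≠ 0) (k : ℕ) : 0 < eSeq ω k :=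
  Nat.pos_of_ne_zero fun h => h0 <| Int.natAbs_eq_zero.mp <|
    Finset.gcd_eq_zero_iff.mp h 0 (by simp)

lemma eSeq_dvd_of_le {j k : ℕ} (hj : j ≤ k) : (eSeq ω k : ℤ) ∣ ω j :=
  Int.natCast_dvd.mpr <| Finset.gcd_dvd (by simp only [Finset.mem_range]; omega)

lemma eSeq_dvd_sum (k : ℕ) (β : Fin (k + 1) → ℤ) :
    (eSeq ω k : ℤ) ∣ ∑ j, β j * ω (j : ℕ) :=
  Finset.dvd_sum fun j _ => (eSeq_dvd_of_le (Nat.lt_succ_iff.mp j.isLt)).mul_left _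

lemma αSeq_succ_mul_eSeq_succ (k : ℕ) :
    αSeq ω (k + 1) * eSeq ω (k + 1) = eSeq ω k := by
  rw [αSeq, Nat.add_sub_cancel, eSeq_succ]
  exact Nat.div_mul_cancel (Nat.gcd_dvd_right _ _)

lemma αSeq_succ_pos (h0 : ω 0 ≠ 0) (k : ℕ) : 0 < αSeq ω (k + 1) :=
  Nat.pos_of_mul_pos_right ((αSeq_succ_mul_eSeq_succ k).symm ▸ eSeq_pos h0 k)

lemma eSeq_dvd_αSeq_succ_mul (k : ℕ) :
    (eSeq ω k : ℤ) ∣ αSeq ω (k + 1) * ω (k + 1) := by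
  rw [← αSeq_succ_mul_eSeq_succ k, Nat.cast_mul]
  exact mul_dvd_mul_left _ (eSeq_dvd_of_le le_rfl)

lemma exists_digit_of_eSeq_succ_dvd (h0 : ω 0 ≠ 0) (k : ℕ) {x : ℤ}
    (hx : (eSeq ω (k + 1) : ℤ) ∣ x) :
    ∃ r : ℤ, 0 ≤ r ∧ r < αSeq ω (k + 1) ∧ (eSeq ω k : ℤ) ∣ x - r * ω (k + 1) := by
  obtain ⟨y, rfl⟩ := hx
  have hα : (0 : ℤ) < αSeq ω (k + 1) := by exact_mod_cast αSeq_succ_pos h0 k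
  set A := Int.gcdA (ω (k + 1)) (eSeq ω k)
  set B := Int.gcdB (ω (k + 1)) (eSeq ω k)
  have bezout : (eSeq ω (k + 1) : ℤ) = ω (k + 1) * A + eSeq ω k * B := by
    rw [eSeq_succ]; exact Int.gcd_eq_gcd_ab _ _
  refine ⟨y * A % αSeq ω (k + 1), Int.emod_nonneg _ hα.ne', Int.emod_lt_of_pos _ hα, ?_⟩
  have split : (eSeq ω (k + 1) : ℤ) * y - y * A % αSeq ω (k + 1) * ω (k + 1)
      = y * A / αSeq ω (k + 1) * (αSeq ω (k + 1) * ω (k + 1)) + eSeq ω k * (y * B) := by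
    rw [bezout, Int.emod_def]; ring
  rw [split]
  exact dvd_add ((eSeq_dvd_αSeq_succ_mul k).mul_left _) (dvd_mul_right _ _)

lemma αSeq_succ_dvd_of_eSeq_dvd_mul (h0 : ω 0 ≠ 0) (k : ℕ) {d : ℤ}
    (hd : (eSeq ω k : ℤ) ∣ d * ω (k + 1)) : (αSeq ω (k + 1) : ℤ) ∣ d := by
  have hgcd : eSeq ω k ∣ d.natAbs * eSeq ω (k + 1) := by
    rw [eSeq_succ, ← Int.gcd_mul_left]
    exact Int.dvd_gcd hd (dvd_mul_left _ _)
  rw [← αSeq_succ_mul_eSeq_succ k] at hgcd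
  exact Int.natCast_dvd.mpr (Nat.dvd_of_mul_dvd_mul_right (eSeq_pos h0 (k + 1)) hgcd)

lemma IsReduced.snoc {k : ℕ} {β : Fin (k + 1) → ℤ} {r : ℤ} (hβ : IsReduced ω β) (hr0 : 0 ≤ r)
    (hr : r < αSeq ω (k + 1)) : IsReduced ω (Fin.snoc β r : Fin (k + 2) → ℤ) := by
  intro j
  refine Fin.lastCases (fun _ => ?_) (fun i hi => ?_) j
  · simpa using And.intro hr0 hr
  · simpa using hβ i (by simpa using hi)

lemma IsReduced.init {k : ℕ} {β : Fin (k + 1) → ℤ} (hβ : IsReduced ω β) :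
    IsReduced ω (Fin.init β) :=
  fun j hj => hβ j.castSucc hj

theorem exists_isReduced_sum_eq (h0 : ω 0 ≠ 0) :
    ∀ (k : ℕ) {x : ℤ}, (eSeq ω k : ℤ) ∣ x →
      ∃ β : Fin (k + 1) → ℤ, IsReduced ω β ∧ ∑ j, β j * ω (j : ℕ) = x
  | 0, x, hx => by
    rw [eSeq_zero, Int.natAbs_dvd] at hx
    exact ⟨fun _ => x / ω 0, fun j hj => by omega, by simp [Int.ediv_mul_cancel hx]⟩
  | k + 1, x, hx => by
    obtain ⟨r, hr0, hr, hdvd⟩ := exists_digit_of_eSeq_succ_dvd h0 k hx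
    obtain ⟨β, hβ, hsum⟩ := exists_isReduced_sum_eq h0 k hdvd
    refine ⟨Fin.snoc β r, hβ.snoc hr0 hr, ?_⟩
    simp [Fin.sum_univ_castSucc, hsum]

theorem IsReduced.eq_of_sum_eq (h0 : ω 0 ≠ 0) :
    ∀ {k : ℕ} {β β' : Fin (k + 1) → ℤ}, IsReduced ω β → IsReduced ω β' →
      ∑ j, β j * ω (j : ℕ) = ∑ j, β' j * ω (j : ℕ) → β = β'
  | 0, β, β', _, _, h => by
    funext j
    fin_cases j
    simpa [h0] using h
  | k + 1, β, β', hβ, hβ', h => by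
    rw [Fin.sum_univ_castSucc (n := k + 1), Fin.sum_univ_castSucc (n := k + 1)] at h
    simp only [Fin.val_last, Fin.val_castSucc] at h
    have hdvd : (eSeq ω k : ℤ) ∣ (β (Fin.last _) - β' (Fin.last _)) * ω (k + 1) := by
      have hdiff : (β (Fin.last _) - β' (Fin.last _)) * ω (k + 1)
          = ∑ i : Fin (k + 1), β' i.castSucc * ω i - ∑ i : Fin (k + 1), β i.castSucc * ω i := by
        linarith
      rw [hdiff]
      exact dvd_sub (eSeq_dvd_sum k _) (eSeq_dvd_sum k _)
    obtain ⟨hl0, hl⟩ := hβ (Fin.last _) (by simp)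
    obtain ⟨hl0', hl'⟩ := hβ' (Fin.last _) (by simp)
    have hlast : β (Fin.last _) = β' (Fin.last _) := sub_eq_zero.mp <|
      Int.eq_zero_of_abs_lt_dvd (αSeq_succ_dvd_of_eSeq_dvd_mul h0 k hdvd)
        (abs_sub_lt_of_nonneg_of_lt hl0 (by simpa using hl) hl0' (by simpa using hl'))
    have hinit : Fin.init β = Fin.init β' :=
      hβ.init.eq_of_sum_eq h0 hβ'.init (by simpa [Fin.init, hlast] using h)
    rw [← Fin.snoc_init_self β, ← Fin.snoc_init_self β', hinit, hlast]

theorem IsAlgebraicUpTo.exists_nat_isReduced_sum_eq (h0 : ω 0 ≠ 0) :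
    ∀ {k : ℕ}, IsAlgebraicUpTo ω k → ∀ c : Fin (k + 1) → ℕ,
      ∃ γ : Fin (k + 1) → ℕ, IsReduced ω (Nat.cast ∘ γ) ∧
        ∑ j, (γ j : ℤ) * ω (j : ℕ) = ∑ j, (c j : ℤ) * ω (j : ℕ)
  | 0, _, c => ⟨c, fun j hj => by omega, rfl⟩
  | k + 1, halg, c => by
    obtain ⟨d, hd⟩ := halg (k + 1) (Nat.le_add_left 1 k) le_rfl
    set q := c (Fin.last _) / αSeq ω (k + 1)
    set r := c (Fin.last _) % αSeq ω (k + 1)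
    have hcarry : (c (Fin.last _) : ℤ) = q * αSeq ω (k + 1) + r := by
      exact_mod_cast (Nat.div_add_mod' _ _).symm
    obtain ⟨γ, hγ, hsum⟩ := IsAlgebraicUpTo.exists_nat_isReduced_sum_eq h0
      (fun k' h1 h2 => halg k' h1 (by omega)) (fun i => c i.castSucc + q * d i)
    refine ⟨Fin.snoc γ r, ?_, ?_⟩
    · rw [Fin.comp_snoc]
      exact hγ.snoc (Int.natCast_nonneg r) (by exact_mod_cast Nat.mod_lt _ (αSeq_succ_pos h0 k))
    · have hpush : ∑ i : Fin (k + 1), ((c i.castSucc + q * d i : ℕ) : ℤ) * ω i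
          = ∑ i : Fin (k + 1), (c i.castSucc : ℤ) * ω i + q * (αSeq ω (k + 1) * ω (k + 1)) := by
        rw [hd, mul_sum, ← sum_add_distrib]
        push_cast
        exact sum_congr rfl fun i _ => by ring
      rw [Fin.sum_univ_castSucc (n := k + 1), Fin.sum_univ_castSucc (n := k + 1)]
      simp only [Fin.snoc_castSucc, Fin.snoc_last, Fin.val_last, Fin.val_castSucc]
      rw [hsum, hpush, hcarry]
      ring

end KeySequence

open KeySequence

theorem key_sequence_unique_representation_general (n : ℕ) (ω : ℕ → ℤ)
    (hpos : 1 ≤ ω 0)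
    (k : ℕ) (hk1 : 1 ≤ k) (hkn : k ≤ n) :
    (∃! β : Fin k → ℤ,
        (∀ j : Fin k, 1 ≤ (j : ℕ) → 0 ≤ β j ∧ β j < (αSeq ω (j : ℕ) : ℤ)) ∧
        (αSeq ω k : ℤ) * ω k = ∑ j : Fin k, β j * ω (j : ℕ)) ∧
    ((∀ k', 1 ≤ k' → k' ≤ n →
        ∃ c : Fin k' → ℕ, (αSeq ω k' : ℤ) * ω k' = ∑ j : Fin k', (c j : ℤ) * ω (j : ℕ)) →
      ∀ β : Fin k → ℤ,
        ((∀ j : Fin k, 1 ≤ (j : ℕ) → 0 ≤ β j ∧ β j < (αSeq ω (j : ℕ) : ℤ)) ∧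
          (αSeq ω k : ℤ) * ω k = ∑ j : Fin k, β j * ω (j : ℕ)) →
        0 ≤ β ⟨0, hk1⟩) := by
  obtain ⟨m, rfl⟩ : ∃ m, k = m + 1 := ⟨k - 1, by omega⟩
  have h0 : ω 0 ≠ 0 := by omega
  obtain ⟨β, hβ, hsum⟩ := exists_isReduced_sum_eq h0 m (eSeq_dvd_αSeq_succ_mul m)
  refine ⟨⟨β, ⟨hβ, hsum.symm⟩, fun β' hβ' =>
    IsReduced.eq_of_sum_eq h0 hβ'.1 hβ (hβ'.2.symm.trans hsum.symm)⟩, fun halg β' hβ' => ?_⟩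
  obtain ⟨c, hc⟩ := halg (m + 1) hk1 hkn
  obtain ⟨γ, hγ, hγsum⟩ := IsAlgebraicUpTo.exists_nat_isReduced_sum_eq h0
    (fun k' h1 h2 => halg k' h1 (by omega)) c
  rw [IsReduced.eq_of_sum_eq h0 hβ'.1 hγ (hβ'.2.symm.trans (hc.trans hγsum.symm))]
  exact Int.natCast_nonneg _

/-- for a key sequence `(ω₀, …, ω_{n+1})` and each `1 ≤ k ≤ n` there exist
unique integers `β_{k,0}, …, β_{k,k-1}` with `0 ≤ β_{k,j} < α_j` for `1 ≤ j ≤ k-1` such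
that `α_k·ω_k = Σ_j β_{k,j}·ω_j`; if moreover the key sequence is algebraic, then
`β_{k,0} ≥ 0`. -/
theorem key_sequence_unique_representation (n : ℕ) (ω : ℕ → ℤ)
    (hpos : 1 ≤ ω 0)
    (hone : eSeq ω (n + 1) = 1)
    (hlt : ∀ k, 1 ≤ k → k ≤ n → ω (k + 1) < (αSeq ω k : ℤ) * ω k)
    (k : ℕ) (hk1 : 1 ≤ k) (hkn : k ≤ n) :
    (∃! β : Fin k → ℤ,
        (∀ j : Fin k, 1 ≤ (j : ℕ) → 0 ≤ β j ∧ β j < (αSeq ω (j : ℕ) : ℤ)) ∧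
        (αSeq ω k : ℤ) * ω k = ∑ j : Fin k, β j * ω (j : ℕ)) ∧
    ((∀ k', 1 ≤ k' → k' ≤ n →
        ∃ c : Fin k' → ℕ, (αSeq ω k' : ℤ) * ω k' = ∑ j : Fin k', (c j : ℤ) * ω (j : ℕ)) →
      ∀ β : Fin k → ℤ,
        ((∀ j : Fin k, 1 ≤ (j : ℕ) → 0 ≤ β j ∧ β j < (αSeq ω (j : ℕ) : ℤ)) ∧
          (αSeq ω k : ℤ) * ω k = ∑ j : Fin k, β j * ω (j : ℕ)) →
        0 ≤ β ⟨0, hk1⟩) :=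
  key_sequence_unique_representation_general n ω hpos k hk1 hkn
end

section
/- Let (ω₀, …, ω_{n+1}) be an algebraic key sequence, with α_k := e_{k−1}/e_k where e_k := gcd(|ω₀|, …, |ω_k|). Let i₁ < i₂ < ⋯ < i_l be exactly those indices k ∈ {1, …, n} with α_k ≥ 2. Then the subsequence (ω₀, ω_{i₁}, …, ω_{i_l}, ω_{n+1}) (the essential subsequence) is also an algebraic key sequence. -/
open Finset

/-!
The indices `k ≤ n` with `α_k = 1` are invisible to every quantity in the definition of an
algebraic key sequence. At such an index `e_k = e_{k-1}`, so `e` is constant between two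
consecutive essential indices, and hence `e` and `α` of the subsequence are those of `ω` at the
corresponding indices. Across a run of such indices the sequence strictly decreases, because
`ω_{k+1} < α_k ω_k = ω_k`, which gives the inequality of the subsequence. Finally, such an `ω_k`
equals `α_k ω_k`, so it lies in the monoid generated by its predecessors; by induction every
`ω_i` before an essential index lies in the monoid generated by the earlier terms of the
subsequence.
-/

section KeySequence

variable {ω : ℕ → ℤ}

lemma eSeq_zero (ω : ℕ → ℤ) : eSeq ω 0 = (ω 0).natAbs := by
  simp [eSeq]

lemma eSeq_succ (ω : ℕ → ℤ) (k : ℕ) :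
    eSeq ω (k + 1) = Nat.gcd (ω (k + 1)).natAbs (eSeq ω k) := by
  rw [eSeq, Finset.range_add_one, Finset.gcd_insert]
  rfl

lemma eSeq_succ_dvd (ω : ℕ → ℤ) (k : ℕ) : eSeq ω (k + 1) ∣ eSeq ω k := by
  rw [eSeq_succ]
  exact Nat.gcd_dvd_right _ _

lemma eSeq_pos (h0 : ω 0 ≠ 0) (k : ℕ) : 0 < eSeq ω k :=
  Nat.pos_of_dvd_of_pos (Finset.gcd_dvd (Finset.mem_range.2 k.succ_pos)) (Int.natAbs_pos.2 h0)

lemma one_le_αSeq (h0 : ω 0 ≠ 0) (k : ℕ) : 1 ≤ αSeq ω k := by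
  have hdvd : eSeq ω k ∣ eSeq ω (k - 1) := by
    rcases k with _ | k
    · exact dvd_rfl
    · exact eSeq_succ_dvd ω k
  exact Nat.div_pos (Nat.le_of_dvd (eSeq_pos h0 _) hdvd) (eSeq_pos h0 k)

lemma eSeq_succ_eq_of_αSeq_eq_one {k : ℕ} (h : αSeq ω (k + 1) = 1) :
    eSeq ω (k + 1) = eSeq ω k := by
  rw [αSeq, Nat.add_sub_cancel, Nat.div_eq_iff_eq_mul_left] at h
  · rw [h, one_mul]
  · exact Nat.pos_of_ne_zero fun h0 => by simp [h0] at h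
  · exact eSeq_succ_dvd ω k

lemma eSeq_eq_of_forall_αSeq_eq_one {a b : ℕ} (hab : a ≤ b)
    (h : ∀ k, a < k → k ≤ b → αSeq ω k = 1) : eSeq ω b = eSeq ω a := by
  induction b, hab using Nat.le_induction with
  | base => rfl
  | succ b hab ih =>
    rw [eSeq_succ_eq_of_αSeq_eq_one (h (b + 1) (by omega) le_rfl)]
    exact ih fun k hk hkb => h k hk (by omega)

lemma lt_αSeq_mul_of_forall_αSeq_eq_one {n t m : ℕ}
    (hlt : ∀ k, 1 ≤ k → k ≤ n → ω (k + 1) < (αSeq ω k : ℤ) * ω k)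
    (ht : 1 ≤ t) (htm : t < m) (hm : m ≤ n + 1) (h : ∀ k, t < k → k < m → αSeq ω k = 1) :
    ω m < (αSeq ω t : ℤ) * ω t := by
  induction m, htm using Nat.le_induction with
  | base => exact hlt t ht (by omega)
  | succ m htm ih =>
    have hstep := hlt m (by omega) (by omega)
    rw [h m (by omega) (by omega), Nat.cast_one, one_mul] at hstep
    exact hstep.trans (ih (by omega) fun k hk hkm => h k hk (by omega))

lemma mem_closure_range_fin_iff (ω : ℕ → ℤ) (k : ℕ) (x : ℤ) :
    x ∈ AddSubmonoid.closure (Set.range fun j : Fin k => ω j) ↔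
      ∃ c : Fin k → ℕ, x = ∑ j : Fin k, (c j : ℤ) * ω j := by
  simp only [AddSubmonoid.mem_closure_range_iff_of_fintype, nsmul_eq_mul]

end KeySequence

lemma exists_le_lt_succ_of_lt {κ : ℕ → ℕ} (hκ0 : κ 0 = 0) {i k : ℕ} (h : i < κ k) :
    ∃ j < k, κ j ≤ i ∧ i < κ (j + 1) := by
  induction k with
  | zero => omega
  | succ k ih =>
    by_cases hik : i < κ k
    · obtain ⟨j, hjk, hj⟩ := ih hik
      exact ⟨j, by omega, hj⟩
    · exact ⟨k, by omega, by omega, h⟩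

structure DropsOnlyInessential (ω ω' : ℕ → ℤ) (κ : ℕ → ℕ) (m : ℕ) : Prop where
  zero : κ 0 = 0
  strictMonoOn : StrictMonoOn κ (Set.Iic m)
  αSeq_eq_one : ∀ j < m, ∀ k, κ j < k → k < κ (j + 1) → αSeq ω k = 1
  eq_comp : ∀ j ≤ m, ω' j = ω (κ j)

namespace DropsOnlyInessential

variable {ω ω' : ℕ → ℤ} {κ : ℕ → ℕ} {m : ℕ}

lemma lt_succ (h : DropsOnlyInessential ω ω' κ m) {j : ℕ} (hj : j < m) : κ j < κ (j + 1) :=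
  h.strictMonoOn (Set.mem_Iic.2 hj.le) (Set.mem_Iic.2 hj) j.lt_succ_self

lemma apply_le_apply (h : DropsOnlyInessential ω ω' κ m) {j k : ℕ} (hjk : j ≤ k) (hk : k ≤ m) :
    κ j ≤ κ k :=
  h.strictMonoOn.monotoneOn (Set.mem_Iic.2 (hjk.trans hk)) (Set.mem_Iic.2 hk) hjk

lemma one_le (h : DropsOnlyInessential ω ω' κ m) {j : ℕ} (hj1 : 1 ≤ j) (hj : j ≤ m) :
    1 ≤ κ j := by
  have := h.strictMonoOn (Set.mem_Iic.2 (Nat.zero_le m)) (Set.mem_Iic.2 hj) hj1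
  rw [h.zero] at this
  exact this

lemma eSeq_pred_eq (h : DropsOnlyInessential ω ω' κ m) {j : ℕ} (hj : j < m) :
    eSeq ω (κ (j + 1) - 1) = eSeq ω (κ j) := by
  have := h.lt_succ hj
  exact eSeq_eq_of_forall_αSeq_eq_one (by omega) fun k hk hk' =>
    h.αSeq_eq_one j hj k hk (by omega)

lemma eSeq_eq (h : DropsOnlyInessential ω ω' κ m) : ∀ j ≤ m, eSeq ω' j = eSeq ω (κ j) := by
  intro j hj
  induction j with
  | zero => rw [h.zero, eSeq_zero, eSeq_zero, h.eq_comp 0 hj, h.zero]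
  | succ j ih =>
    obtain ⟨p, hp⟩ : ∃ p, κ (j + 1) = p + 1 := ⟨κ (j + 1) - 1, by have := h.lt_succ hj; omega⟩
    rw [eSeq_succ, ih (by omega), h.eq_comp (j + 1) hj, ← h.eSeq_pred_eq hj, hp,
      Nat.add_sub_cancel, eSeq_succ]

lemma αSeq_eq (h : DropsOnlyInessential ω ω' κ m) {j : ℕ} (hj1 : 1 ≤ j) (hj : j ≤ m) :
    αSeq ω' j = αSeq ω (κ j) := by
  obtain ⟨i, rfl⟩ : ∃ i, j = i + 1 := ⟨j - 1, by omega⟩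
  rw [αSeq, αSeq, Nat.add_sub_cancel, h.eSeq_eq i (by omega), h.eSeq_eq (i + 1) hj,
    h.eSeq_pred_eq hj]

lemma lt_αSeq_mul (h : DropsOnlyInessential ω ω' κ m) {n : ℕ}
    (hlt : ∀ k, 1 ≤ k → k ≤ n → ω (k + 1) < (αSeq ω k : ℤ) * ω k) (hm : κ m ≤ n + 1)
    {j : ℕ} (hj1 : 1 ≤ j) (hj : j < m) : ω' (j + 1) < (αSeq ω' j : ℤ) * ω' j := by
  rw [h.αSeq_eq hj1 hj.le, h.eq_comp (j + 1) hj, h.eq_comp j hj.le]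
  exact lt_αSeq_mul_of_forall_αSeq_eq_one hlt (h.one_le hj1 hj.le) (h.lt_succ hj)
    ((h.apply_le_apply hj m.le_refl).trans hm) (h.αSeq_eq_one j hj)

lemma closure_range_le (h : DropsOnlyInessential ω ω' κ m) {k : ℕ} (hk : k ≤ m)
    (hfill : ∀ i, 1 ≤ i → i < κ k → αSeq ω i = 1 →
      ω i ∈ AddSubmonoid.closure (Set.range fun m : Fin i => ω m)) :
    AddSubmonoid.closure (Set.range fun i : Fin (κ k) => ω i) ≤
      AddSubmonoid.closure (Set.range fun j : Fin k => ω' j) := by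
  rw [AddSubmonoid.closure_le]
  rintro _ ⟨⟨i, hi⟩, rfl⟩
  induction i using Nat.strong_induction_on with
  | _ i ih =>
    obtain ⟨j, hjk, hji, hij⟩ := exists_le_lt_succ_of_lt h.zero hi
    rcases hji.lt_or_eq with hji | hji
    · refine AddSubmonoid.closure_le.2 ?_
        (hfill i (by omega) hi (h.αSeq_eq_one j (by omega) i hji hij))
      rintro _ ⟨⟨i', hi'⟩, rfl⟩
      exact ih i' hi' (hi'.trans hi)
    · exact AddSubmonoid.subset_closure ⟨⟨j, hjk⟩, by simp [h.eq_comp j (by omega), hji]⟩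

lemma exists_αSeq_mul_eq_sum (h : DropsOnlyInessential ω ω' κ m) {n : ℕ}
    (halg : ∀ k, 1 ≤ k → k ≤ n →
      ∃ c : Fin k → ℕ, (αSeq ω k : ℤ) * ω k = ∑ j : Fin k, (c j : ℤ) * ω (j : ℕ))
    (hm : κ m ≤ n + 1) {k : ℕ} (hk1 : 1 ≤ k) (hk : k < m) :
    ∃ c : Fin k → ℕ, (αSeq ω' k : ℤ) * ω' k = ∑ j : Fin k, (c j : ℤ) * ω' (j : ℕ) := by
  have hκk : κ k < κ m := h.strictMonoOn (Set.mem_Iic.2 hk.le) (Set.mem_Iic.2 le_rfl) hk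
  simp only [← mem_closure_range_fin_iff, h.αSeq_eq hk1 hk.le, h.eq_comp k hk.le]
  refine h.closure_range_le hk.le (fun i hi1 hi hαi => ?_)
    ((mem_closure_range_fin_iff ω _ _).2 (halg (κ k) (h.one_le hk1 hk.le) (by omega)))
  obtain ⟨c, hc⟩ := halg i hi1 (by omega)
  rw [hαi, Nat.cast_one, one_mul] at hc
  exact (mem_closure_range_fin_iff ω _ _).2 ⟨c, hc⟩

end DropsOnlyInessential

section EssentialIndices

/-- The indices `i₀ = 0, i₁, …, i_l, i_{l+1} = n + 1` of the essential subsequence. -/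
def extendIndex (ι : ℕ → ℕ) (l n j : ℕ) : ℕ :=
  if j = 0 then 0 else if j ≤ l then ι j else n + 1

variable {ι : ℕ → ℕ} {l n : ℕ}

lemma extendIndex_of_le {j : ℕ} (h1 : 1 ≤ j) (h2 : j ≤ l) : extendIndex ι l n j = ι j := by
  rw [extendIndex, if_neg (by omega), if_pos h2]

lemma extendIndex_succ_self : extendIndex ι l n (l + 1) = n + 1 := by
  simp [extendIndex]

lemma extendIndex_strictMonoOn (hmono : ∀ j j', 1 ≤ j → j < j' → j' ≤ l → ι j < ι j')
    (hι : ∀ j, 1 ≤ j → j ≤ l → 1 ≤ ι j ∧ ι j ≤ n) :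
    StrictMonoOn (extendIndex ι l n) (Set.Iic (l + 1)) := by
  intro j _ j' hj' hjj'
  simp only [Set.mem_Iic] at hj'
  unfold extendIndex
  split_ifs <;> first
    | omega
    | have := hι j' (by omega) (by omega); omega
    | have := hι j (by omega) (by omega); omega
    | exact hmono j j' (by omega) hjj' (by omega)

lemma dropsOnlyInessential_extendIndex {ω ω' : ℕ → ℤ} (h0 : ω 0 ≠ 0)
    (hmono : ∀ j j', 1 ≤ j → j < j' → j' ≤ l → ι j < ι j')
    (hrange : ∀ k, (1 ≤ k ∧ k ≤ n ∧ 2 ≤ αSeq ω k) ↔ ∃ j, 1 ≤ j ∧ j ≤ l ∧ ι j = k)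
    (hω'0 : ω' 0 = ω 0) (hω'mid : ∀ j, 1 ≤ j → j ≤ l → ω' j = ω (ι j))
    (hω'top : ω' (l + 1) = ω (n + 1)) :
    DropsOnlyInessential ω ω' (extendIndex ι l n) (l + 1) := by
  have hκ := extendIndex_strictMonoOn (n := n) hmono fun j h1 h2 =>
    ((hrange (ι j)).2 ⟨j, h1, h2, rfl⟩).imp_right And.left
  refine ⟨rfl, hκ, fun j hj k hjk hkj => ?_, fun j hj => ?_⟩
  · have hk : k ≤ n := by
      have : extendIndex ι l n (j + 1) ≤ extendIndex ι l n (l + 1) :=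
        hκ.monotoneOn (Set.mem_Iic.2 hj) (Set.mem_Iic.2 le_rfl) hj
      rw [extendIndex_succ_self] at this
      omega
    have hess : ¬ 2 ≤ αSeq ω k := by
      rintro hα
      obtain ⟨j', hj'1, hj'l, rfl⟩ := (hrange k).1 ⟨by omega, hk, hα⟩
      rw [← extendIndex_of_le (ι := ι) (n := n) hj'1 hj'l] at hjk hkj
      have := (hκ.lt_iff_lt (Set.mem_Iic.2 hj.le) (Set.mem_Iic.2 (by omega))).1 hjk
      have := (hκ.lt_iff_lt (Set.mem_Iic.2 (by omega)) (Set.mem_Iic.2 hj)).1 hkj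
      omega
    have := one_le_αSeq h0 k
    omega
  · rcases Nat.eq_zero_or_pos j with rfl | h1
    · exact hω'0
    rcases hj.lt_or_eq with hj | rfl
    · rw [extendIndex_of_le h1 (by omega)]
      exact hω'mid j h1 (by omega)
    · rw [extendIndex_succ_self]
      exact hω'top

end EssentialIndices

/-- let `(ω₀, …, ω_{n+1})` be an algebraic key sequence and let
`ι 1 < ι 2 < ⋯ < ι l` enumerate exactly those indices `k ∈ {1, …, n}` with `α_k ≥ 2`.
Then the essential subsequence `ω' = (ω₀, ω_{ι 1}, …, ω_{ι l}, ω_{n+1})` is again an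
algebraic key sequence. -/
theorem essential_subsequence_algebraic (n l : ℕ) (ω : ℕ → ℤ)
    (hpos : 1 ≤ ω 0)
    (hone : eSeq ω (n + 1) = 1)
    (hlt : ∀ k, 1 ≤ k → k ≤ n → ω (k + 1) < (αSeq ω k : ℤ) * ω k)
    (halg : ∀ k, 1 ≤ k → k ≤ n →
      ∃ c : Fin k → ℕ, (αSeq ω k : ℤ) * ω k = ∑ j : Fin k, (c j : ℤ) * ω (j : ℕ))
    (ι : ℕ → ℕ)
    (hmono : ∀ j j', 1 ≤ j → j < j' → j' ≤ l → ι j < ι j')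
    (hrange : ∀ k, (1 ≤ k ∧ k ≤ n ∧ 2 ≤ αSeq ω k) ↔ ∃ j, 1 ≤ j ∧ j ≤ l ∧ ι j = k)
    (ω' : ℕ → ℤ)
    (hω'0 : ω' 0 = ω 0)
    (hω'mid : ∀ j, 1 ≤ j → j ≤ l → ω' j = ω (ι j))
    (hω'top : ω' (l + 1) = ω (n + 1)) :
    1 ≤ ω' 0 ∧
    eSeq ω' (l + 1) = 1 ∧
    (∀ k, 1 ≤ k → k ≤ l → ω' (k + 1) < (αSeq ω' k : ℤ) * ω' k) ∧
    (∀ k, 1 ≤ k → k ≤ l →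
      ∃ c : Fin k → ℕ, (αSeq ω' k : ℤ) * ω' k = ∑ j : Fin k, (c j : ℤ) * ω' (j : ℕ)) := by
  have h := dropsOnlyInessential_extendIndex (by omega) hmono hrange hω'0 hω'mid hω'top
  have htop : extendIndex ι l n (l + 1) ≤ n + 1 := extendIndex_succ_self.le
  refine ⟨hω'0 ▸ hpos, ?_, fun k hk1 hkl => h.lt_αSeq_mul hlt htop hk1 (by omega),
    fun k hk1 hkl => h.exists_αSeq_mul_eq_sum halg htop hk1 (by omega)⟩
  rw [h.eSeq_eq (l + 1) le_rfl, extendIndex_succ_self, hone]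
end
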